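/- arXiv:2509.17188 — 11 statements merged into one kernel-verified Lean document; each statement's English description precedes it below -/
import Mathlib

section
/- Let c, k, t be positive integers with c ≥ 2 and k ≥ t+2. Suppose F and G are maximal cross t-intersecting families of c-uniform partitions of [ck] with max{τ_t(F), τ_t(G)} ≤ k-2. Then the set of minimum t-covers of F and the set of minimum t-covers of G are cross t-intersecting: any minimum t-cover of F and any minimum t-cover of G share at least t common c-sets. -/
open Finset

/-- `UParts c k ℓ S`: `S` is a family of `ℓ` pairwise disjoint `c`-subsets of `[ck]`. -/
def UParts (c k ℓ : ℕ) (S : Finset (Finset (Fin (c * k)))) : Prop :=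
  S.card = ℓ ∧ (∀ e ∈ S, e.card = c) ∧
    ∀ e ∈ S, ∀ f ∈ S, e ≠ f → Disjoint e f

/-- `UPartition c k F`: `F` is a `c`-uniform partition of `[ck]` into `k` blocks. -/
def UPartition (c k : ℕ) (F : Finset (Finset (Fin (c * k)))) : Prop :=
  UParts c k k F ∧ ∀ x : Fin (c * k), ∃ e ∈ F, x ∈ e

/-- Cross `t`-intersecting families: any two members from different families share `≥ t` blocks. -/
def CrossInt (c k t : ℕ) (F G : Finset (Finset (Finset (Fin (c * k))))) : Prop :=
  ∀ A ∈ F, ∀ B ∈ G, t ≤ (A ∩ B).card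

/-- `S` is a `t`-cover of the family `F`: a family of pairwise disjoint `c`-subsets meeting
every member of `F` in at least `t` blocks. -/
def IsTCover (c k t : ℕ) (F : Finset (Finset (Finset (Fin (c * k)))))
    (S : Finset (Finset (Fin (c * k)))) : Prop :=
  UParts c k S.card S ∧ ∀ A ∈ F, t ≤ (S ∩ A).card

/-- The `t`-covering number: minimum size of a `t`-cover. -/
noncomputable def tau (c k t : ℕ) (F : Finset (Finset (Finset (Fin (c * k))))) : ℕ :=
  sInf {s | ∃ S, IsTCover c k t F S ∧ S.card = s}

/-- `θ(c,k,z) = (1/(k-z)!) · ∏_{i=z}^{k-1} C((k-i)c, c)`. -/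
def theta (c k z : ℕ) : ℚ :=
  (1 / ((k - z).factorial : ℚ)) * ∏ i ∈ Finset.Ico z k, ((((k - i) * c).choose c : ℕ) : ℚ)

/-- `g(c,k,t,z) = θ(c,k,z)·C(z,t)·∏_{j=1}^{z-t}(k-(t+j-1))`. -/
def gfun (c k t z : ℕ) : ℚ :=
  theta c k z * ((z.choose t : ℕ) : ℚ) * ∏ j ∈ Finset.Icc 1 (z - t), ((k - (t + j - 1) : ℕ) : ℚ)

/-- `f₀(c,k,t) = (k-t-1)·θ(c,k,t+1) − C(k-t-1,2)·θ(c,k,t+2)`. -/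
def f0 (c k t : ℕ) : ℚ :=
  ((k - t - 1 : ℕ) : ℚ) * theta c k (t + 1) - (((k - t - 1).choose 2 : ℕ) : ℚ) * theta c k (t + 2)

/-- `f₂(c,k,t) = (t+2)·θ(c,k,t+1) − (t+1)(k-t-1)·θ(c,k,t+2)`. -/
def f2q (c k t : ℕ) : ℚ :=
  ((t : ℚ) + 2) * theta c k (t + 1) - ((t : ℚ) + 1) * ((k - t - 1 : ℕ) : ℚ) * theta c k (t + 2)

lemma chunk {α : Type*} [DecidableEq α] (c : ℕ) (hc : 0 < c) :
    ∀ (r : ℕ) (X : Finset α), X.card = c * r →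
    ∃ P : Finset (Finset α), P.card = r ∧ (∀ e ∈ P, e.card = c) ∧
      (∀ e ∈ P, ∀ f ∈ P, e ≠ f → Disjoint e f) ∧ P.biUnion id = X := by
  intro r
  induction r with
  | zero =>
    intro X hX
    have : X = ∅ := Finset.card_eq_zero.mp (by simpa using hX)
    exact ⟨∅, by simp, by simp, by simp, by simp [this]⟩
  | succ r ih =>
    intro X hX
    have hcle : c ≤ X.card := by rw [hX]; nlinarith
    obtain ⟨Y, hYX, hYc⟩ := Finset.exists_subset_card_eq hcle
    have hXd : (X \ Y).card = c * r := by
      rw [Finset.card_sdiff_of_subset hYX, hX, hYc]; ring_nf; omega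
    obtain ⟨P, hP1, hP2, hP3, hP4⟩ := ih (X \ Y) hXd
    have hPsub : ∀ e ∈ P, e ⊆ X \ Y := by
      intro e he; rw [← hP4]; exact Finset.subset_biUnion_of_mem id he
    have hYnot : Y ∉ P := by
      intro h
      have := hPsub Y h
      have hy : Y.Nonempty := Finset.card_pos.mp (by omega)
      obtain ⟨y, hy⟩ := hy
      exact (Finset.mem_sdiff.mp (this hy)).2 hy
    refine ⟨insert Y P, ?_, ?_, ?_, ?_⟩
    · rw [Finset.card_insert_of_notMem hYnot, hP1]
    · intro e he
      rcases Finset.mem_insert.mp he with h | h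
      · rw [h, hYc]
      · exact hP2 e h
    · intro e he f hf hef
      rcases Finset.mem_insert.mp he with h | h <;> rcases Finset.mem_insert.mp hf with h' | h'
      · exact absurd (h.trans h'.symm) hef
      · subst h
        exact Finset.disjoint_left.mpr fun x hx hx' => (Finset.mem_sdiff.mp (hPsub f h' hx')).2 hx
      · subst h'
        exact Finset.disjoint_left.mpr fun x hx hx' => (Finset.mem_sdiff.mp (hPsub e h hx)).2 hx'
      · exact hP3 e h f h' hef
    · rw [Finset.biUnion_insert, hP4]
      simp only [id]
      exact Finset.union_sdiff_of_subset hYX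

lemma shift {α : Type*} [DecidableEq α] (c r : ℕ) (hc : 2 ≤ c) (hr : 2 ≤ r)
    (X : Finset α) (Q0 : Finset (Finset α)) (hcard : Q0.card = r)
    (hsize : ∀ e ∈ Q0, e.card = c)
    (hdisj : ∀ e ∈ Q0, ∀ f ∈ Q0, e ≠ f → Disjoint e f)
    (hun : Q0.biUnion id = X) :
    ∃ P : Finset (Finset α), P.card = r ∧ (∀ e ∈ P, e.card = c) ∧
      (∀ e ∈ P, ∀ f ∈ P, e ≠ f → Disjoint e f) ∧ P.biUnion id = X ∧
      ∀ e ∈ P, e ∉ Q0 := by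
  haveI : NeZero r := ⟨by omega⟩
  let E : Fin r ≃ Q0 := (Q0.equivFin.trans (finCongr hcard)).symm
  set Q : Fin r → Finset α := fun i => (E i : Finset α) with hQ
  have hQmem : ∀ i, Q i ∈ Q0 := fun i => (E i).2
  have hQinj : Function.Injective Q := fun i j h => E.injective (Subtype.ext h)
  have hQdisj : ∀ i j, i ≠ j → Disjoint (Q i) (Q j) := by
    intro i j hij
    exact hdisj _ (hQmem i) _ (hQmem j) (fun h => hij (hQinj h))
  have hQsize : ∀ i, (Q i).card = c := fun i => hsize _ (hQmem i)
  have hQnon : ∀ i, (Q i).Nonempty := fun i => Finset.card_pos.mp (by rw [hQsize]; omega)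
  set q : Fin r → α := fun i => (hQnon i).choose with hq
  have hqmem : ∀ i, q i ∈ Q i := fun i => (hQnon i).choose_spec
  have hQsurj : ∀ b ∈ Q0, ∃ i, Q i = b := by
    intro b hb; exact ⟨E.symm ⟨b, hb⟩, by simp [hQ, E]⟩
  have hne : ∀ i : Fin r, i + 1 ≠ i := by
    intro i h
    have h1 : (1 : Fin r) = 0 := by
      have := congrArg (fun x => x - i) h
      simpa [add_sub_cancel_right] using this
    have h2 : ((1 : Fin r) : ℕ) = 1 := by
      rw [Fin.val_one']; exact Nat.mod_eq_of_lt (by omega)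
    rw [h1] at h2
    simp at h2
  -- q i's are in distinct blocks
  have hqiff : ∀ i j, q i ∈ Q j → i = j := by
    intro i j h
    by_contra hij
    exact Finset.disjoint_left.mp (hQdisj i j hij) (hqmem i) h
  set Q' : Fin r → Finset α := fun i => insert (q (i + 1)) ((Q i).erase (q i)) with hQ'
  have hnotmem : ∀ i, q (i + 1) ∉ (Q i).erase (q i) := fun i h =>
    (hne i) (hqiff (i + 1) i (Finset.mem_of_mem_erase h))
  have hQ'size : ∀ i, (Q' i).card = c := by
    intro i
    rw [hQ']
    rw [Finset.card_insert_of_notMem (hnotmem i), Finset.card_erase_of_mem (hqmem i), hQsize]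
    omega
  have hQ'sub : ∀ i, Q' i ⊆ Q i ∪ Q (i + 1) := by
    intro i
    apply Finset.insert_subset (Finset.mem_union_right _ (hqmem (i+1)))
    exact (Finset.erase_subset _ _).trans Finset.subset_union_left
  -- a second element of Q' i, from Q i
  have hsecond : ∀ i, ∃ y ∈ Q' i, y ∈ Q i ∧ y ≠ q i := by
    intro i
    have : ((Q i).erase (q i)).Nonempty := by
      apply Finset.card_pos.mp
      rw [Finset.card_erase_of_mem (hqmem i), hQsize]; omega
    obtain ⟨y, hy⟩ := this
    exact ⟨y, Finset.mem_insert_of_mem hy, Finset.mem_of_mem_erase hy,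
      Finset.ne_of_mem_erase hy⟩
  have hQ'ne : ∀ i j, Q' i ≠ Q j := by
    intro i j h
    have h1 : q (i + 1) ∈ Q j := h ▸ Finset.mem_insert_self _ _
    have hj : i + 1 = j := hqiff _ _ h1
    obtain ⟨y, hyQ', hyQ, hyne⟩ := hsecond i
    rw [h] at hyQ'
    have hij : i = j := by
      by_contra hij
      exact Finset.disjoint_left.mp (hQdisj i j hij) hyQ hyQ'
    exact hne i (hj.trans hij.symm)
  have hQ'disj : ∀ i j, i ≠ j → Disjoint (Q' i) (Q' j) := by
    intro i j hij
    rw [Finset.disjoint_left]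
    intro x hxi hxj
    rcases Finset.mem_insert.mp hxi with h1 | h1 <;>
      rcases Finset.mem_insert.mp hxj with h2 | h2
    · subst h1
      have : i + 1 = j + 1 := hqiff _ _ (h2 ▸ hqmem (j + 1))
      exact hij (by simpa using this)
    · subst h1
      have hj' : i + 1 = j := hqiff _ _ (Finset.mem_of_mem_erase h2)
      subst hj'
      exact Finset.notMem_erase _ _ h2
    · subst h2
      have hi' : j + 1 = i := hqiff _ _ (Finset.mem_of_mem_erase h1)
      subst hi'
      exact Finset.notMem_erase _ _ h1
    · exact Finset.disjoint_left.mp (hQdisj i j hij)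
        (Finset.mem_of_mem_erase h1) (Finset.mem_of_mem_erase h2)
  have hQ'non : ∀ i, (Q' i).Nonempty := fun i => ⟨_, Finset.mem_insert_self _ _⟩
  have hQ'inj : Function.Injective Q' := by
    intro i j h
    by_contra hij
    obtain ⟨y, hy⟩ := hQ'non i
    exact Finset.disjoint_left.mp (hQ'disj i j hij) hy (h ▸ hy)
  refine ⟨Finset.image Q' Finset.univ, ?_, ?_, ?_, ?_, ?_⟩
  · rw [Finset.card_image_of_injective _ hQ'inj, Finset.card_univ, Fintype.card_fin]
  · intro e he
    obtain ⟨i, _, rfl⟩ := Finset.mem_image.mp he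
    exact hQ'size i
  · intro e he f hf hef
    obtain ⟨i, _, rfl⟩ := Finset.mem_image.mp he
    obtain ⟨j, _, rfl⟩ := Finset.mem_image.mp hf
    exact hQ'disj i j (fun h => hef (by rw [h]))
  · apply Finset.Subset.antisymm
    · intro x hx
      obtain ⟨e, he, hxe⟩ := Finset.mem_biUnion.mp hx
      obtain ⟨i, _, rfl⟩ := Finset.mem_image.mp he
      have : x ∈ Q i ∪ Q (i + 1) := hQ'sub i hxe
      rw [← hun]
      rcases Finset.mem_union.mp this with h | h
      · exact Finset.mem_biUnion.mpr ⟨Q i, hQmem i, h⟩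
      · exact Finset.mem_biUnion.mpr ⟨Q (i + 1), hQmem (i + 1), h⟩
    · intro x hx
      rw [← hun] at hx
      obtain ⟨b, hb, hxb⟩ := Finset.mem_biUnion.mp hx
      obtain ⟨i, rfl⟩ := hQsurj b hb
      by_cases hxq : x = q i
      · refine Finset.mem_biUnion.mpr ⟨Q' (i - 1), Finset.mem_image.mpr ⟨i - 1, Finset.mem_univ _, rfl⟩, ?_⟩
        have : i - 1 + 1 = i := sub_add_cancel i 1
        rw [hQ']
        simp only [this]
        exact hxq ▸ Finset.mem_insert_self _ _
      · refine Finset.mem_biUnion.mpr ⟨Q' i, Finset.mem_image.mpr ⟨i, Finset.mem_univ _, rfl⟩, ?_⟩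
        exact Finset.mem_insert_of_mem (Finset.mem_erase.mpr ⟨hxq, hxb⟩)
  · intro e he hQ0
    obtain ⟨i, _, rfl⟩ := Finset.mem_image.mp he
    obtain ⟨j, hj⟩ := hQsurj _ hQ0
    exact hQ'ne i j hj.symm

lemma card_biUnion_eq {α : Type*} [DecidableEq α] {c : ℕ} (T : Finset (Finset α))
    (hsize : ∀ e ∈ T, e.card = c)
    (hdisj : ∀ e ∈ T, ∀ f ∈ T, e ≠ f → Disjoint e f) :
    (T.biUnion id).card = c * T.card := by
  have h1 : (T.biUnion id).card = ∑ u ∈ T, u.card := Finset.card_biUnion hdisj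
  rw [h1, Finset.sum_congr rfl (fun e he => hsize e he), Finset.sum_const, smul_eq_mul, mul_comm]

lemma exists_ext (c k : ℕ) (hc : 2 ≤ c) (hk : 2 ≤ k)
    (T S : Finset (Finset (Fin (c * k))))
    (hTsize : ∀ e ∈ T, e.card = c)
    (hTdisj : ∀ e ∈ T, ∀ f ∈ T, e ≠ f → Disjoint e f)
    (hSdisj : ∀ e ∈ S, ∀ f ∈ S, e ≠ f → Disjoint e f)
    (hSsize : ∀ e ∈ S, e.card = c)
    (hTcard : T.card ≤ k - 2) :
    ∃ B, UPartition c k B ∧ T ⊆ B ∧ ∀ e ∈ B, e ∈ S → e ∈ T := by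
  have hc0 : 0 < c := by omega
  set R : Finset (Fin (c * k)) := Finset.univ \ T.biUnion id with hR
  have hTk : T.card ≤ k := by omega
  have hTu : (T.biUnion id).card = c * T.card := card_biUnion_eq T hTsize hTdisj
  have hRcard : R.card = c * (k - T.card) := by
    rw [hR, Finset.card_sdiff_of_subset (Finset.subset_univ _), Finset.card_univ, Fintype.card_fin, hTu,
      Nat.mul_sub]
  set m := k - T.card with hm
  have hm2 : 2 ≤ m := by omega
  set Bad := S.filter (fun e => e ⊆ R) with hBad
  have hBadsize : ∀ e ∈ Bad, e.card = c := fun e he => hSsize e (Finset.mem_of_mem_filter e he)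
  have hBaddisj : ∀ e ∈ Bad, ∀ f ∈ Bad, e ≠ f → Disjoint e f := fun e he f hf h =>
    hSdisj e (Finset.mem_of_mem_filter e he) f (Finset.mem_of_mem_filter f hf) h
  have hBadU : (Bad.biUnion id).card = c * Bad.card := card_biUnion_eq Bad hBadsize hBaddisj
  have hBadsub : Bad.biUnion id ⊆ R := by
    intro x hx
    obtain ⟨e, he, hxe⟩ := Finset.mem_biUnion.mp hx
    exact (Finset.mem_filter.mp he).2 hxe
  have hBadcard : Bad.card ≤ m := by
    have := Finset.card_le_card hBadsub
    rw [hBadU, hRcard] at this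
    exact Nat.le_of_mul_le_mul_left this hc0
  have hR2 : (R \ Bad.biUnion id).card = c * (m - Bad.card) := by
    rw [Finset.card_sdiff_of_subset hBadsub, hRcard, hBadU, ← Nat.mul_sub]
  obtain ⟨P1, hP1c, hP1s, hP1d, hP1u⟩ := chunk c hc0 (m - Bad.card) _ hR2
  have hP1sub : ∀ e ∈ P1, e ⊆ R \ Bad.biUnion id := by
    intro e he; rw [← hP1u]; exact Finset.subset_biUnion_of_mem id he
  set Q0 := Bad ∪ P1 with hQ0
  have hdisjBP : Disjoint Bad P1 := by
    rw [Finset.disjoint_left]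
    intro e heB heP
    have h1 : e ⊆ Bad.biUnion id := Finset.subset_biUnion_of_mem id heB
    have h2 := hP1sub e heP
    have hnon : e.Nonempty := Finset.card_pos.mp (by rw [hBadsize e heB]; omega)
    obtain ⟨x, hx⟩ := hnon
    exact (Finset.mem_sdiff.mp (h2 hx)).2 (h1 hx)
  have hQ0card : Q0.card = m := by
    rw [hQ0, Finset.card_union_of_disjoint hdisjBP, hP1c]
    omega
  have hQ0size : ∀ e ∈ Q0, e.card = c := by
    intro e he
    rcases Finset.mem_union.mp he with h | h
    · exact hBadsize e h
    · exact hP1s e h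
  have hQ0disj : ∀ e ∈ Q0, ∀ f ∈ Q0, e ≠ f → Disjoint e f := by
    intro e he f hf hef
    rcases Finset.mem_union.mp he with h | h <;> rcases Finset.mem_union.mp hf with h' | h'
    · exact hBaddisj e h f h' hef
    · exact Finset.disjoint_left.mpr fun x hx hx' =>
        (Finset.mem_sdiff.mp (hP1sub f h' hx')).2
          (Finset.subset_biUnion_of_mem id h hx)
    · exact Finset.disjoint_left.mpr fun x hx hx' =>
        (Finset.mem_sdiff.mp (hP1sub e h hx)).2
          (Finset.subset_biUnion_of_mem id h' hx')
    · exact hP1d e h f h' hef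
  have hQ0un : Q0.biUnion id = R := by
    rw [hQ0]
    apply Finset.Subset.antisymm
    · intro x hx
      obtain ⟨e, he, hxe⟩ := Finset.mem_biUnion.mp hx
      rcases Finset.mem_union.mp he with h | h
      · exact hBadsub (Finset.mem_biUnion.mpr ⟨e, h, hxe⟩)
      · exact (Finset.mem_sdiff.mp (hP1sub e h hxe)).1
    · intro x hx
      by_cases hb : x ∈ Bad.biUnion id
      · obtain ⟨e, he, hxe⟩ := Finset.mem_biUnion.mp hb
        exact Finset.mem_biUnion.mpr ⟨e, Finset.mem_union_left _ he, hxe⟩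
      · have hx2 : x ∈ R \ Bad.biUnion id := Finset.mem_sdiff.mpr ⟨hx, hb⟩
        rw [← hP1u] at hx2
        obtain ⟨e, he, hxe⟩ := Finset.mem_biUnion.mp hx2
        exact Finset.mem_biUnion.mpr ⟨e, Finset.mem_union_right _ he, hxe⟩
  obtain ⟨P, hPc, hPs, hPd, hPu, hPavoid⟩ := shift c m hc hm2 R Q0 hQ0card hQ0size hQ0disj hQ0un
  have hPsub : ∀ e ∈ P, e ⊆ R := by
    intro e he; rw [← hPu]; exact Finset.subset_biUnion_of_mem id he
  have hTPdisj : ∀ e ∈ T, ∀ f ∈ P, Disjoint e f := by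
    intro e he f hf
    exact Finset.disjoint_left.mpr fun x hx hx' =>
      (Finset.mem_sdiff.mp (hPsub f hf hx')).2 (Finset.subset_biUnion_of_mem id he hx)
  have hTPdisj' : Disjoint T P := by
    rw [Finset.disjoint_left]
    intro e heT heP
    have := hTPdisj e heT e heP
    have hnon : e.Nonempty := Finset.card_pos.mp (by rw [hTsize e heT]; omega)
    obtain ⟨x, hx⟩ := hnon
    exact Finset.disjoint_left.mp this hx hx
  refine ⟨T ∪ P, ⟨⟨?_, ?_, ?_⟩, ?_⟩, Finset.subset_union_left, ?_⟩
  · rw [Finset.card_union_of_disjoint hTPdisj', hPc]; omega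
  · intro e he
    rcases Finset.mem_union.mp he with h | h
    · exact hTsize e h
    · exact hPs e h
  · intro e he f hf hef
    rcases Finset.mem_union.mp he with h | h <;> rcases Finset.mem_union.mp hf with h' | h'
    · exact hTdisj e h f h' hef
    · exact hTPdisj e h f h'
    · exact (hTPdisj f h' e h).symm
    · exact hPd e h f h' hef
  · intro x
    by_cases hx : x ∈ T.biUnion id
    · obtain ⟨e, he, hxe⟩ := Finset.mem_biUnion.mp hx
      exact ⟨e, Finset.mem_union_left _ he, hxe⟩
    · have : x ∈ R := Finset.mem_sdiff.mpr ⟨Finset.mem_univ x, hx⟩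
      rw [← hPu] at this
      obtain ⟨e, he, hxe⟩ := Finset.mem_biUnion.mp this
      exact ⟨e, Finset.mem_union_right _ he, hxe⟩
  · intro e he heS
    rcases Finset.mem_union.mp he with h | h
    · exact h
    · exfalso
      exact hPavoid e h (Finset.mem_union_left _
        (Finset.mem_filter.mpr ⟨heS, hPsub e h⟩))

theorem stmt3 (c k t : ℕ) (hc : 2 ≤ c) (ht : 1 ≤ t) (hk : t + 2 ≤ k)
    (𝓕 𝓖 : Finset (Finset (Finset (Fin (c * k)))))
    (h𝓕 : ∀ F ∈ 𝓕, UPartition c k F) (h𝓖 : ∀ G ∈ 𝓖, UPartition c k G)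
    (hcross : CrossInt c k t 𝓕 𝓖)
    (hmaxF : ∀ F, UPartition c k F → (∀ G ∈ 𝓖, t ≤ (F ∩ G).card) → F ∈ 𝓕)
    (hmaxG : ∀ G, UPartition c k G → (∀ F ∈ 𝓕, t ≤ (F ∩ G).card) → G ∈ 𝓖)
    (hτF : tau c k t 𝓕 ≤ k - 2) (hτG : tau c k t 𝓖 ≤ k - 2) :
    ∀ S T, (IsTCover c k t 𝓕 S ∧ S.card = tau c k t 𝓕) →
      (IsTCover c k t 𝓖 T ∧ T.card = tau c k t 𝓖) → t ≤ (S ∩ T).card := by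
  rintro S T ⟨hScov, hScard⟩ ⟨hTcov, hTcard⟩
  obtain ⟨⟨-, hTsize, hTdisj⟩, hTmeets⟩ := hTcov
  obtain ⟨⟨-, hSsize, hSdisj⟩, hSmeets⟩ := hScov
  have hk2 : 2 ≤ k := by omega
  have hTc2 : T.card ≤ k - 2 := by rw [hTcard]; exact hτG
  obtain ⟨B, hBpart, hTB, hBavoid⟩ :=
    exists_ext c k hc hk2 T S hTsize hTdisj hSdisj hSsize hTc2
  have hBF : B ∈ 𝓕 := by
    apply hmaxF B hBpart
    intro G hG
    refine le_trans (hTmeets G hG) (Finset.card_le_card ?_)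
    exact Finset.inter_subset_inter hTB (Finset.Subset.refl G)
  have h1 : t ≤ (S ∩ B).card := hSmeets B hBF
  refine le_trans h1 (Finset.card_le_card ?_)
  intro x hx
  obtain ⟨hxS, hxB⟩ := Finset.mem_inter.mp hx
  exact Finset.mem_inter.mpr ⟨hxS, hBavoid x hxB hxS⟩
end

section
/- Let c, k, t be positive integers with c ≥ 2 and k ≥ t+3. Suppose R and S are cross t-intersecting families of (t+1)-element families of pairwise disjoint c-subsets of [ck] with τ_t(R) = τ_t(S) = t+1. Then R is t-intersecting if and only if S is t-intersecting; moreover if R is t-intersecting then there exists a family Z of t+2 pairwise disjoint c-subsets with R, S ⊆ {all (t+1)-subfamilies of Z}. -/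
/-!
A `t`-intersecting family of `(t+1)`-sets without a common `t`-subset lies inside the union
`Z = R₁ ∪ R₂` of two of its members, a `(t+2)`-set. When `τ_t(𝓡) = t + 1`, a member of `𝓢`
leaving `Z` would meet every member of `𝓡` in the same `t` blocks, a `t`-cover of size `t`.
The blocks of `Z` are pairwise disjoint because the two blocks outside `R₁ ∩ R₂` lie together in
some member of `𝓢`: otherwise `R₁ ∩ R₂` would be a `t`-cover of `𝓢` of size `t`. Conversely, any
two `(t+1)`-subsets of a `(t+2)`-set share `t` elements.
-/

open Finset

namespace Finset

variable {α : Type*} [DecidableEq α]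

theorem card_inter_lt_card_of_not_subset {A Z : Finset α} (h : ¬A ⊆ Z) :
    (A ∩ Z).card < A.card :=
  card_lt_card ⟨inter_subset_left, fun hA => h fun _ hx => (mem_inter.mp (hA hx)).2⟩

theorem card_add_card_le_card_add_card_inter {A B Z : Finset α} (hA : A ⊆ Z) (hB : B ⊆ Z) :
    A.card + B.card ≤ Z.card + (A ∩ B).card := by
  rw [← card_union_add_card_inter]
  exact Nat.add_le_add_right (card_le_card (union_subset hA hB)) _

theorem mem_or_mem_of_subset_of_card_le_succ {S Z : Finset α} (hSZ : S ⊆ Z)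
    (hcard : Z.card ≤ S.card + 1) {x y : α} (hx : x ∈ Z) (hy : y ∈ Z) (hxy : x ≠ y) :
    x ∈ S ∨ y ∈ S := by
  by_contra! h
  have hsub : S ⊆ (Z.erase x).erase y := fun z hz =>
    mem_erase.mpr ⟨fun hzy => h.2 (hzy ▸ hz),
      mem_erase.mpr ⟨fun hzx => h.1 (hzx ▸ hz), hSZ hz⟩⟩
  have := card_le_card hsub
  rw [card_erase_of_mem (mem_erase.mpr ⟨hxy.symm, hy⟩), card_erase_of_mem hx] at this
  have := one_lt_card.mpr ⟨x, hx, y, hy, hxy⟩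
  omega

theorem mem_of_card_le_card_inter_of_not_subset {T A B : Finset α} {y : α} (hTA : T ⊆ A)
    (hA : A.card = T.card + 1) (hy : y ∈ A \ T) (hTB : ¬T ⊆ B)
    (hAB : T.card ≤ (B ∩ A).card) : y ∈ B := by
  obtain ⟨hyA, hyT⟩ := mem_sdiff.mp hy
  by_contra hyB
  have hA' : insert y T = A :=
    eq_of_subset_of_card_le (insert_subset hyA hTA) (by rw [card_insert_of_notMem hyT, hA])
  rw [← hA', inter_insert_of_notMem hyB, inter_comm] at hAB
  exact hTB (inter_eq_left.mp (eq_of_subset_of_card_le inter_subset_left hAB))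

theorem inter_subset_of_not_subset_union {t : ℕ} {A R₁ R₂ : Finset α} (hA : A.card = t + 1)
    (hR : (R₁ ∩ R₂).card ≤ t) (h₁ : t ≤ (A ∩ R₁).card) (h₂ : t ≤ (A ∩ R₂).card)
    (hAR : ¬A ⊆ R₁ ∪ R₂) : R₁ ∩ R₂ ⊆ A := by
  have hunion := card_union_add_card_inter (A ∩ R₁) (A ∩ R₂)
  rw [← inter_union_distrib_left, ← inter_inter_distrib_left] at hunion
  have hsmall := card_inter_lt_card_of_not_subset hAR
  exact inter_eq_right.mp (eq_of_subset_of_card_le inter_subset_right (by omega))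

variable {t : ℕ} {𝓕 : Finset (Finset α)}

theorem exists_pair_forall_subset_union (hne : 𝓕.Nonempty) (hcard : ∀ A ∈ 𝓕, A.card = t + 1)
    (hint : ∀ A ∈ 𝓕, ∀ B ∈ 𝓕, t ≤ (A ∩ B).card)
    (hstar : ∀ A ∈ 𝓕, ∀ T ⊆ A, T.card = t → ∃ B ∈ 𝓕, ¬T ⊆ B) :
    ∃ R₁ ∈ 𝓕, ∃ R₂ ∈ 𝓕, (R₁ ∩ R₂).card = t ∧ ∀ A ∈ 𝓕, A ⊆ R₁ ∪ R₂ := by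
  obtain ⟨R₁, hR₁⟩ := hne
  obtain ⟨T₀, hT₀, hT₀card⟩ := exists_subset_card_eq (show t ≤ R₁.card by simp [hcard R₁ hR₁])
  obtain ⟨R₂, hR₂, hT₀R₂⟩ := hstar R₁ hR₁ T₀ hT₀ hT₀card
  have hR₂R₁ : ¬R₂ ⊆ R₁ := fun h =>
    hT₀R₂ (eq_of_subset_of_card_le h (by rw [hcard R₁ hR₁, hcard R₂ hR₂]) ▸ hT₀)
  have hT : (R₁ ∩ R₂).card = t := by
    have := card_inter_lt_card_of_not_subset hR₂R₁
    rw [inter_comm, hcard R₂ hR₂] at this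
    exact le_antisymm (Nat.lt_succ_iff.mp this) (hint R₁ hR₁ R₂ hR₂)
  refine ⟨R₁, hR₁, R₂, hR₂, hT, fun A hA => ?_⟩
  by_contra hAZ
  obtain ⟨x, hxA, hxZ⟩ := not_subset.mp hAZ
  obtain ⟨b, hbR₂, hbR₁⟩ := not_subset.mp hR₂R₁
  have hTA : R₁ ∩ R₂ ⊆ A := inter_subset_of_not_subset_union (hcard A hA) hT.le
    (hint A hA R₁ hR₁) (hint A hA R₂ hR₂) hAZ
  obtain ⟨B, hB, hTB⟩ := hstar R₁ hR₁ (R₁ ∩ R₂) inter_subset_left hT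
  have hxB : x ∈ B := mem_of_card_le_card_inter_of_not_subset hTA (by rw [hcard A hA, hT])
    (mem_sdiff.mpr ⟨hxA, fun h => hxZ (mem_union_left _ (mem_inter.mp h).1)⟩) hTB
    (hT ▸ hint B hB A hA)
  have hbB : b ∈ B := mem_of_card_le_card_inter_of_not_subset inter_subset_right
    (by rw [hcard R₂ hR₂, hT]) (mem_sdiff.mpr ⟨hbR₂, fun h => hbR₁ (mem_inter.mp h).1⟩) hTB
    (hT ▸ hint B hB R₂ hR₂)
  have hxR₁ : x ∉ R₁ := fun h => hxZ (mem_union_left _ h)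
  have hxb : x ≠ b := fun h => hxZ (mem_union_right _ (h ▸ hbR₂))
  -- `B` meets `R₁` in `t` elements and also contains `x, b ∉ R₁`, so `|B| ≥ t + 2`.
  have hsub : insert x (insert b (B ∩ R₁)) ⊆ B :=
    insert_subset hxB (insert_subset hbB inter_subset_left)
  have := card_le_card hsub
  rw [card_insert_of_notMem (by simp [hxb, hxR₁]), card_insert_of_notMem (by simp [hbR₁]),
    hcard B hB] at this
  have := hint B hB R₁ hR₁
  omega

theorem subset_of_forall_le_card_inter (hne : 𝓕.Nonempty) {Z S : Finset α}
    (hZ : ∀ A ∈ 𝓕, A ⊆ Z) (hS : S.card = t + 1) (hint : ∀ A ∈ 𝓕, t ≤ (S ∩ A).card)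
    (hstar : ∀ T ⊆ S, T.card = t → ∃ A ∈ 𝓕, ¬T ⊆ A) : S ⊆ Z := by
  by_contra hSZ
  have hsmall := card_inter_lt_card_of_not_subset hSZ
  have heq : ∀ A ∈ 𝓕, S ∩ A = S ∩ Z := fun A hA =>
    eq_of_subset_of_card_le (inter_subset_inter_left (hZ A hA)) (by linarith [hint A hA])
  obtain ⟨A₀, hA₀⟩ := hne
  have hA₀t := hint A₀ hA₀
  rw [heq A₀ hA₀] at hA₀t
  obtain ⟨A, hA, hA'⟩ := hstar (S ∩ Z) inter_subset_left (by omega)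
  exact hA' (heq A hA ▸ inter_subset_right)

end Finset

section

variable {c k t : ℕ}

theorem UParts.mono {ℓ : ℕ} {S T : Finset (Finset (Fin (c * k)))} (h : UParts c k ℓ S)
    (hTS : T ⊆ S) : UParts c k T.card T :=
  ⟨rfl, fun e he => h.2.1 e (hTS he), fun e he f hf => h.2.2 e (hTS he) f (hTS hf)⟩

theorem UParts.union {ℓ₁ ℓ₂ : ℕ} {R₁ R₂ : Finset (Finset (Fin (c * k)))}
    (h₁ : UParts c k ℓ₁ R₁) (h₂ : UParts c k ℓ₂ R₂)
    (hdisj : ∀ e ∈ R₁ \ R₂, ∀ f ∈ R₂ \ R₁, Disjoint e f) :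
    UParts c k (R₁ ∪ R₂).card (R₁ ∪ R₂) := by
  refine ⟨rfl, fun e he => (mem_union.mp he).elim (h₁.2.1 e) (h₂.2.1 e), ?_⟩
  intro e he f hf hef
  by_cases he₂ : e ∈ R₂
  · by_cases hf₂ : f ∈ R₂
    · exact h₂.2.2 e he₂ f hf₂ hef
    have hf₁ := (mem_union.mp hf).resolve_right hf₂
    by_cases he₁ : e ∈ R₁
    · exact h₁.2.2 e he₁ f hf₁ hef
    · exact (hdisj f (mem_sdiff.mpr ⟨hf₁, hf₂⟩) e (mem_sdiff.mpr ⟨he₂, he₁⟩)).symm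
  have he₁ := (mem_union.mp he).resolve_right he₂
  by_cases hf₁ : f ∈ R₁
  · exact h₁.2.2 e he₁ f hf₁ hef
  · exact hdisj e (mem_sdiff.mpr ⟨he₁, he₂⟩) f
      (mem_sdiff.mpr ⟨(mem_union.mp hf).resolve_left hf₁, hf₁⟩)

theorem CrossInt.symm {F G : Finset (Finset (Finset (Fin (c * k))))}
    (h : CrossInt c k t F G) : CrossInt c k t G F :=
  fun B hB A hA => inter_comm A B ▸ h A hA B hB

theorem tau_le_card_of_isTCover {𝓕 : Finset (Finset (Finset (Fin (c * k))))}
    {T : Finset (Finset (Fin (c * k)))} (h : IsTCover c k t 𝓕 T) : tau c k t 𝓕 ≤ T.card :=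
  Nat.sInf_le ⟨T, h, rfl⟩

theorem tau_empty : tau c k t ∅ = 0 :=
  Nat.eq_zero_of_le_zero (tau_le_card_of_isTCover (T := ∅) ⟨⟨rfl, by simp, by simp⟩, by simp⟩)

theorem nonempty_of_lt_tau {𝓕 : Finset (Finset (Finset (Fin (c * k))))}
    (hτ : t < tau c k t 𝓕) : 𝓕.Nonempty := by
  rw [nonempty_iff_ne_empty]
  rintro rfl
  simp [tau_empty] at hτ

theorem exists_not_subset_of_lt_tau {ℓ : ℕ} {𝓕 : Finset (Finset (Finset (Fin (c * k))))}
    {S T : Finset (Finset (Fin (c * k)))} (hτ : t < tau c k t 𝓕) (hS : UParts c k ℓ S)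
    (hTS : T ⊆ S) (hT : T.card = t) : ∃ A ∈ 𝓕, ¬T ⊆ A := by
  by_contra! h
  have := tau_le_card_of_isTCover (𝓕 := 𝓕)
    ⟨hS.mono hTS, fun A hA => by rw [inter_eq_left.mpr (h A hA), hT]⟩
  omega

theorem exists_uparts_superset_of_lt_tau {𝓡 𝓢 : Finset (Finset (Finset (Fin (c * k))))}
    (h𝓡 : ∀ R ∈ 𝓡, UParts c k (t + 1) R) (h𝓢 : ∀ S ∈ 𝓢, UParts c k (t + 1) S)
    (hcross : CrossInt c k t 𝓡 𝓢) (hτR : t < tau c k t 𝓡) (hτS : t < tau c k t 𝓢)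
    (hRint : ∀ R₁ ∈ 𝓡, ∀ R₂ ∈ 𝓡, t ≤ (R₁ ∩ R₂).card) :
    ∃ Z, UParts c k (t + 2) Z ∧ (∀ R ∈ 𝓡, R ⊆ Z) ∧ ∀ S ∈ 𝓢, S ⊆ Z := by
  obtain ⟨R₁, hR₁, R₂, hR₂, hT, hRZ⟩ := exists_pair_forall_subset_union
    (nonempty_of_lt_tau hτR) (fun R hR => (h𝓡 R hR).1) hRint
    (fun R hR T hTR hT => exists_not_subset_of_lt_tau hτR (h𝓡 R hR) hTR hT)
  have hSZ : ∀ S ∈ 𝓢, S ⊆ R₁ ∪ R₂ := fun S hS =>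
    subset_of_forall_le_card_inter (nonempty_of_lt_tau hτR) hRZ (h𝓢 S hS).1
      (fun R hR => hcross.symm S hS R hR)
      (fun T hTS hT => exists_not_subset_of_lt_tau hτR (h𝓢 S hS) hTS hT)
  have hZcard : (R₁ ∪ R₂).card = t + 2 := by
    have := card_union_add_card_inter R₁ R₂
    rw [(h𝓡 R₁ hR₁).1, (h𝓡 R₂ hR₂).1, hT] at this
    omega
  have hdisj : ∀ e ∈ R₁ \ R₂, ∀ f ∈ R₂ \ R₁, Disjoint e f := by
    intro e he f hf
    rw [mem_sdiff] at he hf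
    obtain ⟨S, hS, hTS⟩ := exists_not_subset_of_lt_tau hτS (h𝓡 R₁ hR₁) inter_subset_left hT
    obtain ⟨z, hzT, hzS⟩ := not_subset.mp hTS
    -- `S` misses a single element of `R₁ ∪ R₂`, and that element lies in `R₁ ∩ R₂`.
    have hmem : ∀ y ∈ R₁ ∪ R₂, y ∉ R₁ ∩ R₂ → y ∈ S := fun y hy hyT =>
      (mem_or_mem_of_subset_of_card_le_succ (hSZ S hS) (by rw [hZcard, (h𝓢 S hS).1])
        (inter_subset_left.trans subset_union_left hzT) hy
        (fun h => hyT (h ▸ hzT))).resolve_left hzS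
    exact (h𝓢 S hS).2.2 e (hmem e (mem_union_left _ he.1) (fun h => he.2 (mem_inter.mp h).2))
      f (hmem f (mem_union_right _ hf.1) (fun h => hf.2 (mem_inter.mp h).1))
      (fun h => he.2 (h ▸ hf.1))
  exact ⟨R₁ ∪ R₂, hZcard ▸ (h𝓡 R₁ hR₁).union (h𝓡 R₂ hR₂) hdisj, hRZ, hSZ⟩

end

theorem stmt6_general (c k t : ℕ)
    (𝓡 𝓢 : Finset (Finset (Finset (Fin (c * k)))))
    (h𝓡 : ∀ R ∈ 𝓡, UParts c k (t + 1) R) (h𝓢 : ∀ S ∈ 𝓢, UParts c k (t + 1) S)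
    (hcross : CrossInt c k t 𝓡 𝓢)
    (hτR : tau c k t 𝓡 = t + 1) (hτS : tau c k t 𝓢 = t + 1) :
    ((∀ R₁ ∈ 𝓡, ∀ R₂ ∈ 𝓡, t ≤ (R₁ ∩ R₂).card) ↔
      (∀ S₁ ∈ 𝓢, ∀ S₂ ∈ 𝓢, t ≤ (S₁ ∩ S₂).card)) ∧
    ((∀ R₁ ∈ 𝓡, ∀ R₂ ∈ 𝓡, t ≤ (R₁ ∩ R₂).card) →
      ∃ Z, UParts c k (t + 2) Z ∧ (∀ R ∈ 𝓡, R ⊆ Z) ∧ ∀ S ∈ 𝓢, S ⊆ Z) := by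
  have hRS := exists_uparts_superset_of_lt_tau h𝓡 h𝓢 hcross (by omega) (by omega)
  have hSR := exists_uparts_superset_of_lt_tau h𝓢 h𝓡 hcross.symm (by omega) (by omega)
  have hint : ∀ 𝓕 : Finset (Finset (Finset (Fin (c * k)))), (∀ A ∈ 𝓕, UParts c k (t + 1) A) →
      ∀ Z, UParts c k (t + 2) Z → (∀ A ∈ 𝓕, A ⊆ Z) →
      ∀ A ∈ 𝓕, ∀ B ∈ 𝓕, t ≤ (A ∩ B).card := by
    intro 𝓕 h𝓕 Z hZ hFZ A hA B hB
    have := card_add_card_le_card_add_card_inter (hFZ A hA) (hFZ B hB)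
    rw [hZ.1, (h𝓕 A hA).1, (h𝓕 B hB).1] at this
    omega
  refine ⟨⟨fun hR => ?_, fun hS => ?_⟩, hRS⟩
  · obtain ⟨Z, hZ, -, hSZ⟩ := hRS hR
    exact hint 𝓢 h𝓢 Z hZ hSZ
  · obtain ⟨Z, hZ, -, hRZ⟩ := hSR hS
    exact hint 𝓡 h𝓡 Z hZ hRZ

theorem stmt6 (c k t : ℕ) (hc : 2 ≤ c) (ht : 1 ≤ t) (hk : t + 3 ≤ k)
    (𝓡 𝓢 : Finset (Finset (Finset (Fin (c * k)))))
    (h𝓡 : ∀ R ∈ 𝓡, UParts c k (t + 1) R) (h𝓢 : ∀ S ∈ 𝓢, UParts c k (t + 1) S)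
    (hcross : CrossInt c k t 𝓡 𝓢)
    (hτR : tau c k t 𝓡 = t + 1) (hτS : tau c k t 𝓢 = t + 1) :
    ((∀ R₁ ∈ 𝓡, ∀ R₂ ∈ 𝓡, t ≤ (R₁ ∩ R₂).card) ↔
      (∀ S₁ ∈ 𝓢, ∀ S₂ ∈ 𝓢, t ≤ (S₁ ∩ S₂).card)) ∧
    ((∀ R₁ ∈ 𝓡, ∀ R₂ ∈ 𝓡, t ≤ (R₁ ∩ R₂).card) →
      ∃ Z, UParts c k (t + 2) Z ∧ (∀ R ∈ 𝓡, R ⊆ Z) ∧ ∀ S ∈ 𝓢, S ⊆ Z) :=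
  stmt6_general c k t 𝓡 𝓢 h𝓡 h𝓢 hcross hτR hτS
end

section
/- Let c, k, t be positive integers with c ≥ 2 and k ≥ t+3. Suppose F is a family of c-uniform partitions of [ck] with τ_t(F) = t+1, and A is a family of t pairwise disjoint c-subsets contained in some minimum t-cover of F. Let E be the union of all minimum t-covers of F containing A. Then there is m ∈ {t+1,...,k-1} such that E consists of m pairwise disjoint c-subsets, the minimum t-covers of F containing A are exactly the (t+1)-element families S with A ⊆ S ⊆ E, and every F ∈ F with A ⊄ F satisfies |F ∩ E| = m - 1. -/
open Finset

theorem stmt8 (c k t : ℕ) (hc : 2 ≤ c) (ht : 1 ≤ t) (hk : t + 3 ≤ k)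
    (𝓕 : Finset (Finset (Finset (Fin (c * k))))) (h𝓕 : ∀ F ∈ 𝓕, UPartition c k F)
    (hτ : tau c k t 𝓕 = t + 1)
    (A : Finset (Finset (Fin (c * k)))) (hA : UParts c k t A)
    (hA' : ∃ S, IsTCover c k t 𝓕 S ∧ S.card = t + 1 ∧ A ⊆ S)
    (E : Finset (Finset (Fin (c * k))))
    (hE : ∀ e, e ∈ E ↔ ∃ S, IsTCover c k t 𝓕 S ∧ S.card = t + 1 ∧ A ⊆ S ∧ e ∈ S) :
    ∃ m, t + 1 ≤ m ∧ m ≤ k - 1 ∧ UParts c k m E ∧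
      (∀ S, (IsTCover c k t 𝓕 S ∧ S.card = t + 1 ∧ A ⊆ S) ↔
        (S.card = t + 1 ∧ A ⊆ S ∧ S ⊆ E)) ∧
      ∀ F ∈ 𝓕, ¬ A ⊆ F → (F ∩ E).card = m - 1 := by
  obtain ⟨S₀, hS₀cov, hS₀card, hAS₀⟩ := hA'
  obtain ⟨hAcard, hAc, hAdisj⟩ := hA
  have hAE : A ⊆ E := fun a ha => (hE a).mpr ⟨S₀, hS₀cov, hS₀card, hAS₀, hAS₀ ha⟩
  have hS₀E : S₀ ⊆ E := fun e he => (hE e).mpr ⟨S₀, hS₀cov, hS₀card, hAS₀, he⟩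
  -- every e ∈ E \ A yields the minimum cover insert e A
  have key : ∀ e ∈ E, e ∉ A → IsTCover c k t 𝓕 (insert e A) := by
    intro e he hea
    obtain ⟨S, hScov, hScard, hAS, heS⟩ := (hE e).mp he
    have hins : insert e A ⊆ S := insert_subset heS hAS
    have hcardins : (insert e A).card = t + 1 := by
      rw [card_insert_of_notMem hea, hAcard]
    have hSeq : S = insert e A :=
      (eq_of_subset_of_card_le hins (le_of_eq (hScard.trans hcardins.symm))).symm
    rwa [← hSeq]
  -- there is F₀ ∈ 𝓕 with ¬ A ⊆ F₀
  have hF₀ex : ∃ F ∈ 𝓕, ¬ A ⊆ F := by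
    by_contra h
    push_neg at h
    have hcov : IsTCover c k t 𝓕 A := by
      refine ⟨by rw [hAcard]; exact ⟨hAcard, hAc, hAdisj⟩, fun F hF => ?_⟩
      rw [inter_eq_left.mpr (h F hF), hAcard]
    have : tau c k t 𝓕 ≤ t := Nat.sInf_le ⟨A, hcov, hAcard⟩
    omega
  obtain ⟨F₀, hF₀𝓕, hAF₀⟩ := hF₀ex
  -- (A ∩ F).card < t for any F with ¬ A ⊆ F
  have hAFlt : ∀ F, ¬ A ⊆ F → (A ∩ F).card < t := by
    intro F hAF
    have hss : A ∩ F ⊂ A := by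
      refine ssubset_of_subset_of_ne inter_subset_left (fun h => hAF ?_)
      exact inter_eq_left.mp h
    have := card_lt_card hss
    omega
  -- every element of E \ A belongs to every F with ¬ A ⊆ F
  have hEF : ∀ F ∈ 𝓕, ¬ A ⊆ F → ∀ e ∈ E, e ∉ A → e ∈ F := by
    intro F hF hAF e he hea
    by_contra heF
    have hcov := (key e he hea).2 F hF
    rw [insert_inter_of_notMem heF] at hcov
    exact absurd hcov (not_le.mpr (hAFlt F hAF))
  -- pick e₁ ∈ E \ A
  have hASss : A ⊂ S₀ := by
    refine ssubset_of_subset_of_ne hAS₀ (fun h => ?_)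
    rw [h] at hAcard; omega
  obtain ⟨e₁, he₁S, he₁A⟩ := exists_of_ssubset hASss
  have he₁E : e₁ ∈ E := hS₀E he₁S
  -- (A ∩ F).card = t - 1 for F with ¬ A ⊆ F
  have hAFeq : ∀ F ∈ 𝓕, ¬ A ⊆ F → (A ∩ F).card = t - 1 := by
    intro F hF hAF
    have hcov := (key e₁ he₁E he₁A).2 F hF
    have he₁F : e₁ ∈ F := hEF F hF hAF e₁ he₁E he₁A
    rw [insert_inter_of_mem he₁F] at hcov
    have h1 : (insert e₁ (A ∩ F)).card ≤ (A ∩ F).card + 1 := card_insert_le _ _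
    have h2 := hAFlt F hAF
    omega
  -- cards of elements of E
  have hEc : ∀ e ∈ E, e.card = c := by
    intro e he
    by_cases hea : e ∈ A
    · exact hAc e hea
    · exact (key e he hea).1.2.1 e (mem_insert_self e A)
  -- pairwise disjointness of E
  have hEdisj : ∀ e ∈ E, ∀ f ∈ E, e ≠ f → Disjoint e f := by
    intro e he f hf hne
    by_cases hea : e ∈ A
    · by_cases hfa : f ∈ A
      · exact hAdisj e hea f hfa hne
      · exact ((key f hf hfa).1.2.2 f (mem_insert_self f A) e
          (mem_insert_of_mem hea) hne.symm).symm
    · by_cases hfa : f ∈ A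
      · exact (key e he hea).1.2.2 e (mem_insert_self e A) f (mem_insert_of_mem hfa) hne
      · exact (h𝓕 F₀ hF₀𝓕).1.2.2 e (hEF F₀ hF₀𝓕 hAF₀ e he hea)
          f (hEF F₀ hF₀𝓕 hAF₀ f hf hfa) hne
  set m := E.card with hm
  have hm1 : t + 1 ≤ m := hS₀card ▸ card_le_card hS₀E
  have hEsdcard : (E \ A).card = m - t := by rw [card_sdiff_of_subset hAE, hAcard]
  -- the final counting claim
  have hcount : ∀ F ∈ 𝓕, ¬ A ⊆ F → (F ∩ E).card = m - 1 := by
    intro F hF hAF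
    have hun : F ∩ E = (F ∩ A) ∪ (E \ A) := by
      apply Subset.antisymm
      · intro x hx
        rw [mem_inter] at hx
        by_cases hxa : x ∈ A
        · exact mem_union_left _ (mem_inter.mpr ⟨hx.1, hxa⟩)
        · exact mem_union_right _ (mem_sdiff.mpr ⟨hx.2, hxa⟩)
      · intro x hx
        rcases mem_union.mp hx with h | h
        · rw [mem_inter] at h
          exact mem_inter.mpr ⟨h.1, hAE h.2⟩
        · rw [mem_sdiff] at h
          exact mem_inter.mpr ⟨hEF F hF hAF x h.1 h.2, h.1⟩
    have hdisj : Disjoint (F ∩ A) (E \ A) := by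
      rw [disjoint_left]
      intro x hx hx'
      exact (mem_sdiff.mp hx').2 (mem_inter.mp hx).2
    have hFA : (F ∩ A).card = t - 1 := by rw [inter_comm]; exact hAFeq F hF hAF
    rw [hun, card_union_of_disjoint hdisj, hFA, hEsdcard]
    omega
  -- m ≤ k - 1
  have hmk : m ≤ k - 1 := by
    by_contra hmk'
    -- union of E
    have hbU : ((E.biUnion fun e => e).card) = m * c := by
      rw [card_biUnion (fun e he f hf hne => hEdisj e he f hf hne)]
      rw [Finset.sum_congr rfl (fun e he => hEc e he), Finset.sum_const, smul_eq_mul]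
    have hle : (E.biUnion fun e => e) ⊆ Finset.univ := subset_univ _
    have hcle : m * c ≤ c * k := by
      have := card_le_card hle
      rw [hbU, card_univ, Fintype.card_fin] at this
      exact this
    have hmk2 : m ≤ k := Nat.le_of_mul_le_mul_left (by rwa [mul_comm] at hcle : c * m ≤ c * k) (by omega)
    have hmeq : m = k := by omega
    have hbUuniv : (E.biUnion fun e => e) = Finset.univ := by
      apply eq_of_subset_of_card_le hle
      rw [hbU, card_univ, Fintype.card_fin, hmeq, mul_comm]
    -- a ∈ A with a ∉ F₀
    have hss : A ∩ F₀ ⊂ A := by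
      refine ssubset_of_subset_of_ne inter_subset_left (fun h => hAF₀ (inter_eq_left.mp h))
    obtain ⟨a, haA, haAF⟩ := exists_of_ssubset hss
    have haF₀ : a ∉ F₀ := fun h => haAF (mem_inter.mpr ⟨haA, h⟩)
    have haE : a ∈ E := hAE haA
    -- E ∩ F₀ = E.erase a
    have hEF₀sub : E ∩ F₀ ⊆ E.erase a := by
      intro x hx
      rw [mem_inter] at hx
      exact mem_erase.mpr ⟨fun h => haF₀ (h ▸ hx.2), hx.1⟩
    have hEF₀card : (E ∩ F₀).card = m - 1 := by rw [inter_comm]; exact hcount F₀ hF₀𝓕 hAF₀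
    have hEF₀ : E ∩ F₀ = E.erase a := by
      apply eq_of_subset_of_card_le hEF₀sub
      rw [card_erase_of_mem haE, hEF₀card]
    -- a is nonempty; x ∈ a lies in some block b of F₀
    have hanonempty : a.Nonempty := by
      rw [← card_pos, hAc a haA]; omega
    obtain ⟨x, hxa⟩ := hanonempty
    obtain ⟨b, hbF₀, hxb⟩ := (h𝓕 F₀ hF₀𝓕).2 x
    have hba : b ≠ a := fun h => haF₀ (h ▸ hbF₀)
    -- b ⊆ a
    have hbsub : b ⊆ a := by
      intro y hyb
      have hyU : y ∈ E.biUnion fun e => e := hbUuniv ▸ mem_univ y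
      obtain ⟨g, hgE, hyg⟩ := mem_biUnion.mp hyU
      by_cases hga : g = a
      · exact hga ▸ hyg
      · exfalso
        have hgF₀ : g ∈ F₀ := by
          have : g ∈ E ∩ F₀ := hEF₀ ▸ mem_erase.mpr ⟨hga, hgE⟩
          exact (mem_inter.mp this).2
        by_cases hgb : g = b
        · have hbE : b ∈ E := hgb ▸ hgE
          have := hEdisj a haE b hbE (fun h => hba h.symm)
          exact (disjoint_left.mp this hxa) hxb
        · have := (h𝓕 F₀ hF₀𝓕).1.2.2 g hgF₀ b hbF₀ hgb
          exact (disjoint_left.mp this hyg) hyb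
    have hbeq : b = a := by
      apply eq_of_subset_of_card_le hbsub
      rw [hAc a haA, (h𝓕 F₀ hF₀𝓕).1.2.1 b hbF₀]
    exact haF₀ (hbeq ▸ hbF₀)
  refine ⟨m, hm1, hmk, ⟨rfl, hEc, hEdisj⟩, ?_, hcount⟩
  intro S
  constructor
  · rintro ⟨hcov, hcard, hAS⟩
    exact ⟨hcard, hAS, fun e he => (hE e).mpr ⟨S, hcov, hcard, hAS, he⟩⟩
  · rintro ⟨hcard, hAS, hSE⟩
    have hASss : A ⊂ S := by
      refine ssubset_of_subset_of_ne hAS (fun h => ?_)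
      rw [h] at hAcard; omega
    obtain ⟨e, heS, heA⟩ := exists_of_ssubset hASss
    have heE : e ∈ E := hSE heS
    have hins : insert e A ⊆ S := insert_subset heS hAS
    have hcardins : (insert e A).card = t + 1 := by
      rw [card_insert_of_notMem heA, hAcard]
    have hSeq : S = insert e A :=
      (eq_of_subset_of_card_le hins (le_of_eq (hcard.trans hcardins.symm))).symm
    exact ⟨hSeq ▸ key e heE heA, hcard, hAS⟩
end

section
/- Let c, k, t be positive integers with c ≥ 3 and k ≥ t+2, and suppose c ≥ 3 + 2·log₂ t or k ≥ 2t+2. Define g(c,k,t,z) = θ(c,k,z)·binom(z,t)·∏_{j=1}^{z-t}(k-(t+j-1)) with θ(c,k,z) = (1/(k-z)!)·∏_{i=z}^{k-1} binom((k-i)c, c). Then g(c,k,t,s+1) < g(c,k,t,s) for every s ∈ {t, t+1, ..., k-2}. -/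
open Finset

section AuxStmt9
open Nat

lemma chooseLB (m c : ℕ) (hm : 2 ≤ m) (hc : 1 ≤ c) :
    m ^ (c - 1) * ((m - 1) * c + 1) ≤ (m * c).choose c := by
  obtain ⟨d, rfl⟩ : ∃ d, c = d + 1 := ⟨c - 1, by omega⟩
  have key : (d + 1) ! * (m ^ d * ((m - 1) * (d+1) + 1)) ≤ (d + 1) ! * ((m * (d+1)).choose (d+1)) := by
    rw [← Nat.descFactorial_eq_factorial_mul_choose, Nat.descFactorial_eq_prod_range,
      Finset.prod_range_succ]
    have hfac : (d + 1) ! = ∏ i ∈ range d, (d + 1 - i) := by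
      have h1 : ∏ i ∈ range (d+1), (d + 1 - i) = ∏ i ∈ range (d+1), (i + 1) := by
        rw [← Finset.prod_range_reflect]
        apply Finset.prod_congr rfl
        intro i hi
        simp only [Finset.mem_range] at hi
        omega
      have h2 : ∏ i ∈ range (d+1), (d + 1 - i) = (∏ i ∈ range d, (d + 1 - i)) * 1 := by
        rw [Finset.prod_range_succ]; congr 1; omega
      rw [Finset.prod_range_add_one_eq_factorial] at h1
      omega
    have hmain : (d + 1) ! * m ^ d ≤ ∏ i ∈ range d, (m * (d+1) - i) := by
      rw [hfac]
      have hpm : m ^ d = ∏ _i ∈ range d, m := by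
        rw [Finset.prod_const, Finset.card_range]
      rw [hpm, ← Finset.prod_mul_distrib]
      apply Finset.prod_le_prod'
      intro i hi
      simp only [Finset.mem_range] at hi
      have h5 : (d + 1 - i) * m = m * (d+1) - m * i := by
        rw [Nat.sub_mul]; ring_nf
      rw [h5]
      have h6 : m * i ≥ i := Nat.le_mul_of_pos_left i (by omega)
      have h7 : i ≤ m * (d+1) := by nlinarith
      omega
    have hlast : (m - 1) * (d+1) + 1 ≤ m * (d+1) - d := by
      have h3 : (m - 1) * (d+1) = m * (d+1) - (d+1) := by
        rw [Nat.sub_one_mul]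
      have h4 : d + 1 ≤ m * (d+1) := Nat.le_mul_of_pos_left _ (by omega)
      omega
    calc (d + 1) ! * (m ^ d * ((m - 1) * (d+1) + 1))
        = ((d + 1) ! * m ^ d) * ((m - 1) * (d+1) + 1) := by ring
      _ ≤ (∏ i ∈ range d, (m * (d+1) - i)) * (m * (d+1) - d) :=
          Nat.mul_le_mul hmain hlast
  exact Nat.le_of_mul_le_mul_left key (Nat.factorial_pos _)

lemma keyineq (c t s m : ℕ) (hc : 3 ≤ c) (ht : 1 ≤ t) (hts : t ≤ s) (hm : 2 ≤ m)
    (hcase : 8 * t ^ 2 ≤ 2 ^ c ∨ 2 * t + 2 ≤ m + s) :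
    (s + 1) * m ^ 2 < (s + 1 - t) * ((m * c).choose c) := by
  have hLB := chooseLB m c hm (by omega)
  set C := (m * c).choose c with hCdef
  obtain ⟨n, rfl⟩ : ∃ n, m = n + 2 := ⟨m - 2, by omega⟩
  obtain ⟨b, rfl⟩ : ∃ b, c = b + 3 := ⟨c - 3, by omega⟩
  have e0 : n + 2 - 1 = n + 1 := by omega
  have e0' : b + 3 - 1 = b + 2 := by omega
  rw [e0, e0'] at hLB
  set X := (n + 2) ^ 2 with hXdef
  have hXpos : 0 < X := by positivity
  have hX4 : 4 ≤ X := by rw [hXdef]; nlinarith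
  have hC1 : X * (3 * n + 4) ≤ C := by
    refine le_trans ?_ hLB
    have h1 : X ≤ (n + 2) ^ (b + 2) :=
      Nat.pow_le_pow_right (by omega) (by omega)
    have h2 : 3 * n + 4 ≤ (n + 1) * (b + 3) + 1 := by
      have : (n + 1) * 3 ≤ (n + 1) * (b + 3) := Nat.mul_le_mul_left _ (by omega)
      omega
    exact Nat.mul_le_mul h1 h2
  have hC4 : 4 * X ≤ C := le_trans (by nlinarith) hC1
  obtain ⟨u, hu1, hu2⟩ : ∃ u, s + 1 = u + t ∧ 1 ≤ u := ⟨s + 1 - t, by omega, by omega⟩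
  have hut : s + 1 - t = u := by omega
  rw [hut, hu1]
  by_cases hA : 2 * t ≤ s
  · -- case A : u ≥ t + 1
    have hu3 : t + 1 ≤ u := by omega
    calc (u + t) * X ≤ (2 * u - 1) * X := Nat.mul_le_mul_right _ (by omega)
      _ < 4 * u * X := (Nat.mul_lt_mul_right hXpos).mpr (by omega)
      _ = u * (4 * X) := by ring
      _ ≤ u * C := Nat.mul_le_mul_left u hC4
  · rcases hcase with hcase | hcase
    · -- case C
      have hu4 : u ≤ t := by omega
      have hC3 : 2 * (n + 2) ^ (b + 3) ≤ C := by
        refine le_trans ?_ hLB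
        have h2 : 2 * (n + 2) ≤ (n + 1) * (b + 3) + 1 := by
          have : (n + 1) * 3 ≤ (n + 1) * (b + 3) := Nat.mul_le_mul_left _ (by omega)
          omega
        calc 2 * (n + 2) ^ (b + 3) = (n + 2) ^ (b + 2) * (2 * (n + 2)) := by
              rw [pow_succ]; ring
          _ ≤ (n + 2) ^ (b + 2) * ((n + 1) * (b + 3) + 1) := Nat.mul_le_mul_left _ h2
      have h4t : 4 * t ^ 2 ≤ 2 ^ (b + 2) := by
        have h5 : (2:ℕ) ^ (b + 3) = 2 * 2 ^ (b + 2) := by rw [pow_succ]; ring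
        omega
      have hsq : (2 * t * X) ^ 2 < C ^ 2 := by
        have e4 : (2 * (n + 2) ^ (b + 3)) ^ 2 ≤ C ^ 2 := Nat.pow_le_pow_left hC3 2
        have e5 : (2 * (n + 2) ^ (b + 3)) ^ 2 = 4 * ((n + 2) ^ 4 * (n + 2) ^ (2 * b + 2)) := by
          rw [mul_pow, ← pow_mul, ← pow_add]
          norm_num
          congr 1
          ring
        have e3 : 2 ^ (b + 2) ≤ (n + 2) ^ (2 * b + 2) := by
          calc 2 ^ (b + 2) ≤ 2 ^ (2 * b + 2) := Nat.pow_le_pow_right (by omega) (by omega)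
            _ ≤ (n + 2) ^ (2 * b + 2) := Nat.pow_le_pow_left (by omega) _
        have e6 : (2 * t * X) ^ 2 < 4 * ((n + 2) ^ 4 * (n + 2) ^ (2 * b + 2)) := by
          have e1 : (2 * t * X) ^ 2 = 4 * t ^ 2 * (n + 2) ^ 4 := by rw [hXdef]; ring
          rw [e1]
          have p2 : 4 ≤ 2 ^ (b + 2) := by
            calc (4:ℕ) = 2 ^ 2 := by norm_num
              _ ≤ 2 ^ (b + 2) := Nat.pow_le_pow_right (by omega) (by omega)
          have q1 : 4 * t ^ 2 * (n + 2) ^ 4 ≤ 2 ^ (b + 2) * (n + 2) ^ 4 :=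
            Nat.mul_le_mul_right _ h4t
          have q2 : 2 ^ (b + 2) * (n + 2) ^ 4 ≤ (n + 2) ^ (2 * b + 2) * (n + 2) ^ 4 :=
            Nat.mul_le_mul_right _ e3
          have p3 : 0 < (n + 2) ^ 4 := by positivity
          have p4 : 0 < (n + 2) ^ (2 * b + 2) := by positivity
          nlinarith
        omega
      have hlt : 2 * t * X < C := by
        by_contra h
        push_neg at h
        exact absurd (Nat.pow_le_pow_left h 2) (by omega)
      calc (u + t) * X ≤ 2 * t * X := Nat.mul_le_mul_right _ (by omega)
        _ < C := hlt
        _ ≤ u * C := Nat.le_mul_of_pos_left _ (by omega)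
    · -- case B
      have hB : t + 1 ≤ n + u := by omega
      have h8 : n ≤ u * n := Nat.le_mul_of_pos_left n (by omega)
      have h9 : u * (n + 2) = u * n + 2 * u := by ring
      calc (u + t) * X < u * (n + 2) * X := (Nat.mul_lt_mul_right hXpos).mpr (by omega)
        _ = u * (X * (n + 2)) := by ring
        _ ≤ u * (X * (3 * n + 4)) :=
            Nat.mul_le_mul_left _ (Nat.mul_le_mul_left _ (by omega))
        _ ≤ u * C := Nat.mul_le_mul_left _ hC1

end AuxStmt9

theorem stmt9 (c k t : ℕ) (hc : 3 ≤ c) (ht : 1 ≤ t) (hk : t + 2 ≤ k)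
    (hcond : (3 + 2 * Real.logb 2 t ≤ (c : ℝ)) ∨ 2 * t + 2 ≤ k) :
    ∀ s, t ≤ s → s ≤ k - 2 → gfun c k t (s + 1) < gfun c k t s := by
  -- convert the real condition to a ℕ condition
  have hcond' : 8 * t ^ 2 ≤ 2 ^ c ∨ 2 * t + 2 ≤ k := by
    rcases hcond with h | h
    · left
      have ht0 : (0:ℝ) < (t:ℝ) ^ 2 := by positivity
      have hlogb : Real.logb 2 ((t:ℝ) ^ 2) ≤ ((c - 3 : ℕ) : ℝ) := by
        rw [Real.logb_pow]
        have : ((c - 3 : ℕ) : ℝ) = (c : ℝ) - 3 := by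
          push_cast [Nat.cast_sub hc]; ring
        rw [this]
        push_cast
        linarith
      have h2 : ((t:ℝ) ^ 2) ≤ (2:ℝ) ^ (((c - 3 : ℕ) : ℝ)) :=
        (Real.logb_le_iff_le_rpow (by norm_num) ht0).mp hlogb
      rw [Real.rpow_natCast] at h2
      have h3 : t ^ 2 ≤ 2 ^ (c - 3) := by exact_mod_cast h2
      have h4 : (2:ℕ) ^ c = 8 * 2 ^ (c - 3) := by
        have : c = 3 + (c - 3) := by omega
        rw [this, pow_add]
        norm_num
      omega
    · right; exact h
  intro s hts hsk
  have hsk2 : s + 2 ≤ k := by omega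
  set Q : ℕ := ∏ i ∈ Finset.Ico (s + 1) k, (((k - i) * c).choose c) with hQdef
  set P : ℕ := ∏ j ∈ Finset.Icc 1 (s - t), (k - (t + j - 1)) with hPdef
  have hQpos : 0 < Q := by
    apply Finset.prod_pos
    intro i hi
    simp only [Finset.mem_Ico] at hi
    exact Nat.choose_pos (Nat.le_mul_of_pos_left c (by omega))
  have hPpos : 0 < P := by
    apply Finset.prod_pos
    intro j hj
    simp only [Finset.mem_Icc] at hj
    omega
  have hQc : ((Q : ℕ) : ℚ) = ∏ i ∈ Finset.Ico (s + 1) k, ((((k - i) * c).choose c : ℕ) : ℚ) := by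
    rw [hQdef]; push_cast; rfl
  have hPc : ((P : ℕ) : ℚ) = ∏ j ∈ Finset.Icc 1 (s - t), ((k - (t + j - 1) : ℕ) : ℚ) := by
    rw [hPdef]; push_cast; rfl
  have e1 : gfun c k t s =
      (((((k - s) * c).choose c) * Q * s.choose t * P : ℕ) : ℚ) / ((k - s).factorial : ℚ) := by
    unfold gfun theta
    rw [Finset.prod_eq_prod_Ico_succ_bot (show s < k by omega), ← hQc, ← hPc]
    push_cast
    ring
  have e2 : gfun c k t (s + 1) =
      ((Q * (s + 1).choose t * (P * (k - s)) : ℕ) : ℚ) / ((k - s - 1).factorial : ℚ) := by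
    unfold gfun theta
    have h1 : k - (s + 1) = k - s - 1 := by omega
    have h2 : s + 1 - t = (s - t) + 1 := by omega
    rw [h1, h2, Finset.prod_Icc_succ_top (Nat.succ_le_succ (Nat.zero_le _))]
    have h3 : t + (s - t + 1) - 1 = s := by omega
    rw [h3, ← hQc, ← hPc]
    push_cast
    ring
  rw [e1, e2, div_lt_div_iff₀ (by positivity) (by positivity)]
  have hnat : (Q * (s + 1).choose t * (P * (k - s))) * (k - s).factorial <
      ((((k - s) * c).choose c) * Q * s.choose t * P) * (k - s - 1).factorial := by
    set m : ℕ := k - s with hmdef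
    have hm2 : 2 ≤ m := by omega
    have hfac : m.factorial = m * (m - 1).factorial := by
      rw [← Nat.mul_factorial_pred (by omega)]
    have core : (s + 1).choose t * m ^ 2 < (((m * c).choose c)) * s.choose t := by
      have key := keyineq c t s m hc ht hts hm2 (by omega)
      have hid : s.choose t * (s + 1) = (s + 1).choose t * (s + 1 - t) :=
        Nat.choose_mul_succ_eq s t
      have hpos1 : 0 < s + 1 - t := by omega
      have hpos2 : 0 < s.choose t := Nat.choose_pos hts
      have step : ((s + 1).choose t * m ^ 2) * (s + 1 - t) <
          ((((m * c).choose c)) * s.choose t) * (s + 1 - t) := by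
        calc ((s + 1).choose t * m ^ 2) * (s + 1 - t)
            = ((s + 1).choose t * (s + 1 - t)) * m ^ 2 := by ring
          _ = (s.choose t * (s + 1)) * m ^ 2 := by rw [hid]
          _ = s.choose t * ((s + 1) * m ^ 2) := by ring
          _ < s.choose t * ((s + 1 - t) * ((m * c).choose c)) :=
              (Nat.mul_lt_mul_left hpos2).mpr key
          _ = ((((m * c).choose c)) * s.choose t) * (s + 1 - t) := by ring
      exact Nat.lt_of_mul_lt_mul_right step
    rw [hfac]
    have hre1 : Q * (s + 1).choose t * (P * m) * (m * (m - 1).factorial) =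
        ((Q * P) * ((s + 1).choose t * m ^ 2)) * (m - 1).factorial := by ring
    have hre2 : ((m * c).choose c) * Q * s.choose t * P * (m - 1).factorial =
        ((Q * P) * (((m * c).choose c) * s.choose t)) * (m - 1).factorial := by ring
    rw [hre1, hre2]
    exact (Nat.mul_lt_mul_right (Nat.factorial_pos _)).mpr
      ((Nat.mul_lt_mul_left (by positivity)).mpr core)
  exact_mod_cast hnat
end

section
/- Let c, k, t be positive integers with c ≥ 3 and k ≥ t+2, and suppose c ≥ 3 + 2·log₂ t or k ≥ 2t+2. With g(c,k,t,z) = θ(c,k,z)·binom(z,t)·∏_{j=1}^{z-t}(k-(t+j-1)) and θ(c,k,z) = (1/(k-z)!)·∏_{i=z}^{k-1} binom((k-i)c, c), we have g(c,k,t,k) < g(c,k,t,k-2). -/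
open Finset

lemma cb_step (n : ℕ) : 2 * Nat.centralBinom n ≤ Nat.centralBinom (n+1) := by
  have h := Nat.succ_mul_centralBinom_succ n
  have h2 : (n+1) * (2 * Nat.centralBinom n) ≤ (n+1) * Nat.centralBinom (n+1) := by
    rw [h]; ring_nf; nlinarith [Nat.centralBinom_pos n]
  exact Nat.le_of_mul_le_mul_left h2 (Nat.succ_pos n)

lemma cb_lb : ∀ n, 3 ≤ n → 3 * 2^(n-1) < Nat.centralBinom n ∧ 20 ≤ Nat.centralBinom n := by
  intro n hn
  induction n with
  | zero => omega
  | succ m ih =>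
    rcases Nat.lt_or_ge m 3 with hm | hm
    · interval_cases m
      · omega
      · omega
      · constructor <;> simp [Nat.centralBinom] <;> decide
    · obtain ⟨h1, h2⟩ := ih hm
      have hs := cb_step m
      constructor
      · have : m + 1 - 1 = (m - 1) + 1 := by omega
        rw [this, pow_succ]
        omega
      · omega

lemma key_core (c t a : ℕ) (hc : 3 ≤ c) (ht : 1 ≤ t)
    (hcase : t^2 ≤ 2^(c-3) ∨ t ≤ a) :
    4 * ((t+a+1)*(t+a+2)) < Nat.centralBinom c * ((a+2)*(a+1)) := by
  obtain ⟨h1, h2⟩ := cb_lb c hc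
  rcases hcase with hA | hB
  · obtain ⟨d, rfl⟩ : ∃ d, c = d + 3 := ⟨c - 3, by omega⟩
    have hp : 2^(d+3-3) = 2^d := by norm_num
    rw [hp] at hA
    have hp2 : (3:ℕ) * 2^(d+3-1) = 12 * 2^d := by
      have : d + 3 - 1 = d + 2 := by omega
      rw [this]; ring
    rw [hp2] at h1
    have hr : 2*((t+a+2)*(t+a+1)) ≤ (t+1)*(t+2)*((a+2)*(a+1)) := by
      have : (t+1)*(t+2)*((a+2)*(a+1))
          = 2*((t+a+2)*(t+a+1)) + ((t^2+3*t)*a^2 + (3*t^2+5*t)*a) := by ring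
      omega
    have h6 : 2*((t+1)*(t+2)) ≤ 12 * t^2 := by nlinarith
    have hx : 4 * ((t+a+1)*(t+a+2)) ≤ 12 * 2^d * ((a+2)*(a+1)) := by
      calc 4 * ((t+a+1)*(t+a+2)) = 2 * (2*((t+a+2)*(t+a+1))) := by ring
        _ ≤ 2 * ((t+1)*(t+2)*((a+2)*(a+1))) := by
            exact Nat.mul_le_mul_left _ hr
        _ = (2*((t+1)*(t+2))) * ((a+2)*(a+1)) := by ring
        _ ≤ 12 * t^2 * ((a+2)*(a+1)) := Nat.mul_le_mul_right _ h6
        _ ≤ 12 * 2^d * ((a+2)*(a+1)) := by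
            have h12 : 12 * t^2 ≤ 12 * 2^d := by omega
            exact Nat.mul_le_mul_right _ h12
    have hy : 12 * 2^d * ((a+2)*(a+1)) < Nat.centralBinom (d+3) * ((a+2)*(a+1)) := by
      have hpos : (0:ℕ) < (a+2)*(a+1) := by positivity
      exact mul_lt_mul_of_pos_right h1 hpos
    omega
  · have : 4 * ((t+a+1)*(t+a+2)) < 20 * ((a+2)*(a+1)) := by nlinarith
    have : 20 * ((a+2)*(a+1)) ≤ Nat.centralBinom c * ((a+2)*(a+1)) :=
      Nat.mul_le_mul_right _ h2
    omega

lemma key_nat (c k t : ℕ) (hc : 3 ≤ c) (ht : 1 ≤ t) (hk : t + 2 ≤ k)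
    (hcase : t^2 ≤ 2^(c-3) ∨ 2*t + 2 ≤ k) :
    4 * k.choose t < Nat.centralBinom c * (k-2).choose t := by
  obtain ⟨a, rfl⟩ : ∃ a, k = t + a + 2 := ⟨k - t - 2, by omega⟩
  obtain ⟨d, hd⟩ : ∃ d, t + a = d := ⟨t + a, rfl⟩
  have hcore := key_core c t a hc ht (by omega)
  have e1 := Nat.choose_mul_succ_eq (t+a) t
  have e2 := Nat.choose_mul_succ_eq (t+a+1) t
  have hsub1 : t + a + 1 - t = a + 1 := by omega
  have hsub2 : t + a + 1 + 1 - t = a + 2 := by omega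
  rw [hsub1] at e1
  rw [hsub2] at e2
  -- identity: (t+a).choose t * ((t+a+1)*(t+a+2)) = (t+a+2).choose t * ((a+2)*(a+1))
  have hid : (t+a).choose t * ((t+a+1)*(t+a+2)) = (t+a+2).choose t * ((a+2)*(a+1)) := by
    calc (t+a).choose t * ((t+a+1)*(t+a+2))
        = ((t+a).choose t * (t+a+1)) * (t+a+2) := by ring
      _ = ((t+a+1).choose t * (a+1)) * (t+a+2) := by rw [e1]
      _ = ((t+a+1).choose t * (t+a+1+1)) * (a+1) := by ring
      _ = ((t+a+2).choose t * (a+2)) * (a+1) := by rw [e2]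
      _ = (t+a+2).choose t * ((a+2)*(a+1)) := by ring
  have hpos : 0 < (t+a).choose t := Nat.choose_pos (by omega)
  have hX : 0 < (a+2)*(a+1) := by positivity
  have hmul : (4 * (t+a+2).choose t) * ((a+2)*(a+1))
      < (Nat.centralBinom c * (t+a).choose t) * ((a+2)*(a+1)) := by
    calc (4 * (t+a+2).choose t) * ((a+2)*(a+1))
        = 4 * ((t+a+2).choose t * ((a+2)*(a+1))) := by ring
      _ = 4 * ((t+a).choose t * ((t+a+1)*(t+a+2))) := by rw [← hid]
      _ = (t+a).choose t * (4 * ((t+a+1)*(t+a+2))) := by ring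
      _ < (t+a).choose t * (Nat.centralBinom c * ((a+2)*(a+1))) :=
          mul_lt_mul_of_pos_left hcore hpos
      _ = (Nat.centralBinom c * (t+a).choose t) * ((a+2)*(a+1)) := by ring
  have hfin := Nat.lt_of_mul_lt_mul_right hmul
  have : t + a + 2 - 2 = t + a := by omega
  rw [this]
  omega

theorem stmt10 (c k t : ℕ) (hc : 3 ≤ c) (ht : 1 ≤ t) (hk : t + 2 ≤ k)
    (hcond : (3 + 2 * Real.logb 2 t ≤ (c : ℝ)) ∨ 2 * t + 2 ≤ k) :
    gfun c k t k < gfun c k t (k - 2) := by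
  -- reduce the real-log condition to a natural-number condition
  have hcase : t^2 ≤ 2^(c-3) ∨ 2*t + 2 ≤ k := by
    rcases hcond with h | h
    · left
      have ht0 : (0:ℝ) < (t:ℝ)^2 := by positivity
      have hlog : Real.logb 2 ((t:ℝ)^2) ≤ ((c - 3 : ℕ) : ℝ) := by
        rw [Real.logb_pow]
        have : ((c - 3 : ℕ) : ℝ) = (c:ℝ) - 3 := by
          have : (3:ℕ) ≤ c := hc
          push_cast [Nat.cast_sub this]; ring
        rw [this]; push_cast at h ⊢; linarith
      have := (Real.logb_le_iff_le_rpow (by norm_num : (1:ℝ) < 2) ht0).mp hlog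
      rw [Real.rpow_natCast] at this
      exact_mod_cast this
    · right; exact h
  obtain ⟨a, rfl⟩ : ∃ a, k = t + a + 2 := ⟨k - t - 2, by omega⟩
  set k := t + a + 2 with hkdef
  -- θ at z = k
  have hθk : theta c k k = 1 := by
    simp [theta, hkdef]
  -- θ at z = k - 2
  have hθk2 : theta c k (k - 2) = ((Nat.centralBinom c : ℕ) : ℚ) / 2 := by
    have h2 : k - 2 = t + a := by omega
    rw [h2]
    unfold theta
    have e1 : k - (t + a) = 2 := by omega
    rw [show Finset.Ico (t+a) k = Finset.Ico (t+a) ((t+a)+1+1) from by rw [hkdef],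
      Finset.prod_Ico_succ_top (by omega), Finset.prod_Ico_succ_top (by omega),
      Finset.Ico_self, Finset.prod_empty, e1]
    have e3 : k - (t + a + 1) = 1 := by omega
    rw [e3]
    simp [Nat.centralBinom]
    norm_num
    ring
  -- products
  have hz1 : k - t = a + 2 := by omega
  have hz2 : k - 2 - t = a := by omega
  set P : ℚ := ∏ j ∈ Finset.Icc 1 a, ((k - (t + j - 1) : ℕ) : ℚ) with hP
  have hprod : (∏ j ∈ Finset.Icc 1 (k - t), ((k - (t + j - 1) : ℕ) : ℚ)) = P * 2 := by
    rw [hz1, show a + 2 = (a+1) + 1 from rfl,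
      Finset.prod_Icc_succ_top (by omega), Finset.prod_Icc_succ_top (by omega)]
    have e4 : k - (t + (a+1) - 1) = 2 := by omega
    have e5 : k - (t + (a+1+1) - 1) = 1 := by omega
    rw [e4, e5]
    push_cast
    ring
  have hPpos : 0 < P := by
    rw [hP]
    apply Finset.prod_pos
    intro j hj
    simp only [Finset.mem_Icc] at hj
    have : 0 < k - (t + j - 1) := by omega
    exact_mod_cast this
  -- the key natural-number inequality
  have hkey : 4 * k.choose t < Nat.centralBinom c * (k-2).choose t :=
    key_nat c k t hc ht hk hcase
  have hkeyQ : (4:ℚ) * (k.choose t : ℕ) < ((Nat.centralBinom c : ℕ):ℚ) * ((k-2).choose t : ℕ) := by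
    exact_mod_cast hkey
  unfold gfun
  rw [hθk, hθk2, hprod, hz2]
  rw [← hP]
  have := mul_lt_mul_of_pos_right hkeyQ hPpos
  nlinarith [this, hPpos]
end

section
/- For every integer c ≥ 1 and integer x ≥ 2, x³/binom(xc,c) ≤ 8/binom(2c,c); equivalently, the sequence x ↦ x³/binom(xc,c) is non-increasing for x ≥ 2. -/
open Finset

/-! Writing `(n choose c) · c! = n (n - 1) ⋯ (n - c + 1)`, the factorwise bound
`(x + 1)(xc - i) ≤ x((x + 1)c - i)` gives `(x + 1)^c · C(xc, c) ≤ x^c · C((x + 1)c, c)`.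
Since `x^(c-k) ≤ (x + 1)^(c-k)`, the ratio `x^k / C(xc, c)` is then non-increasing in `x ≥ 1`
for every `k ≤ c`; take `k = 3` and compare with `x = 2`. -/

lemma pow_succ_mul_descFactorial_le (x c : ℕ) :
    (x + 1) ^ c * (x * c).descFactorial c ≤ x ^ c * ((x + 1) * c).descFactorial c := by
  have h : ∏ i ∈ range c, (x + 1) * (x * c - i) ≤ ∏ i ∈ range c, x * ((x + 1) * c - i) := by
    refine prod_le_prod' fun i _ => ?_
    rcases le_total i (x * c) with hi | hi
    · have hsub : (x + 1) * c - i = (x * c - i) + c := by rw [add_mul, one_mul]; omega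
      rw [hsub]
      nlinarith [Nat.sub_le (x * c) i]
    · simp [Nat.sub_eq_zero_of_le hi]
  simpa only [prod_mul_distrib, prod_const, card_range, ← Nat.descFactorial_eq_prod_range]
    using h

lemma pow_succ_mul_choose_le (x c : ℕ) :
    (x + 1) ^ c * (x * c).choose c ≤ x ^ c * ((x + 1) * c).choose c := by
  have h := pow_succ_mul_descFactorial_le x c
  simp only [Nat.descFactorial_eq_factorial_mul_choose, mul_left_comm _ c.factorial] at h
  exact Nat.le_of_mul_le_mul_left h c.factorial_pos

lemma pow_succ_mul_choose_le_of_le {x c k : ℕ} (hx : 0 < x) (hk : k ≤ c) :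
    (x + 1) ^ k * (x * c).choose c ≤ x ^ k * ((x + 1) * c).choose c := by
  refine Nat.le_of_mul_le_mul_right ?_ (Nat.pow_pos hx : 0 < x ^ (c - k))
  calc (x + 1) ^ k * (x * c).choose c * x ^ (c - k)
      ≤ (x + 1) ^ k * (x * c).choose c * (x + 1) ^ (c - k) := by gcongr; omega
    _ = (x + 1) ^ c * (x * c).choose c := by
        rw [mul_right_comm, ← pow_add, Nat.add_sub_cancel' hk]
    _ ≤ x ^ c * ((x + 1) * c).choose c := pow_succ_mul_choose_le x c
    _ = x ^ k * ((x + 1) * c).choose c * x ^ (c - k) := by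
        rw [mul_right_comm, ← pow_add, Nat.add_sub_cancel' hk]

lemma antitoneOn_pow_div_choose_mul {c k : ℕ} (hk : k ≤ c) :
    AntitoneOn (fun x : ℕ => (x : ℚ) ^ k / (((x * c).choose c : ℕ) : ℚ)) (Set.Ici 1) := by
  refine antitoneOn_nat_Ici_of_succ_le fun x hx => ?_
  have choose_pos : ∀ y : ℕ, 1 ≤ y → (0 : ℚ) < (((y * c).choose c : ℕ) : ℚ) := fun y hy =>
    Nat.cast_pos.mpr (Nat.choose_pos (Nat.le_mul_of_pos_left c hy))
  rw [div_le_div_iff₀ (choose_pos (x + 1) (by omega)) (choose_pos x hx)]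
  exact_mod_cast pow_succ_mul_choose_le_of_le hx hk

theorem stmt12 (c x : ℕ) (hc : 3 ≤ c) (hx : 2 ≤ x) :
    ((x : ℚ) ^ 3) / (((x * c).choose c : ℕ) : ℚ) ≤ 8 / (((2 * c).choose c : ℕ) : ℚ) := by
  have h := antitoneOn_pow_div_choose_mul hc (Set.mem_Ici.mpr (by norm_num : 1 ≤ 2))
    (Set.mem_Ici.mpr (by omega : 1 ≤ x)) hx
  norm_num at h
  exact h
end

section
/- Let c, k, t be positive integers with c ≥ 6 and k ≥ t+3, and suppose c ≥ 4·log₂ t + 7 or k ≥ 2t+3. Define θ(c,k,z) = (1/(k-z)!)·∏_{i=z}^{k-1} binom((k-i)c, c), g(c,k,t,z) = θ(c,k,z)·binom(z,t)·∏_{j=1}^{z-t}(k-(t+j-1)), and f₀(c,k,t) = (k-t-1)·θ(c,k,t+1) − binom(k-t-1, 2)·θ(c,k,t+2). Then g(c,k,t,t+1)·g(c,k,t,t+2) < f₀(c,k,t)². -/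
open Finset

/-! Write `m = k - t - 1` and `R = C(mc, c)`. The recursion `(k - z) θ(z) = C((k - z)c, c) θ(z + 1)`
expresses everything through `θ(t + 2)`: the left side is `θ(t + 2)² · R · Q / 2` with
`Q = (t + 1)²(t + 2)(m + 1)²`, and `f₀ = (R - C(m, 2)) θ(t + 2)`. Hence it suffices that `Q ≤ R`:
then also `4 C(m, 2) ≤ R`, and `R Q / 2 ≤ R² / 2 < (3R / 4)² ≤ (R - C(m, 2))²`.
In fact `Q ≤ m ^ c ≤ R`: if `m ≥ t + 2` then `Q ≤ m⁵`, and if `2 ^ c ≥ 128 t⁴` (the logarithmic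
hypothesis) then `Q ≤ (27 / 128) 2 ^ c m² ≤ m ^ c`. -/

lemma pow_le_choose_mul (m c : ℕ) : m ^ c ≤ (m * c).choose c := by
  rcases Nat.eq_zero_or_pos m with rfl | hm
  · rcases c with _ | c <;> simp
  induction c with
  | zero => simp
  | succ c ih =>
    calc m ^ (c + 1) = m * m ^ c := by ring
      _ ≤ m * (m * c).choose c := Nat.mul_le_mul_left m ih
      _ ≤ m * (m * (c + 1) - 1).choose c :=
          Nat.mul_le_mul_left m (Nat.choose_le_choose c (by rw [Nat.mul_succ]; omega))
      _ = (m * (c + 1)).choose (c + 1) := (Nat.choose_mul_right c.succ_ne_zero).symm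

lemma cubic_mul_sq_le_pow_of_le {t m c : ℕ} (htm : t + 2 ≤ m) (hc : 5 ≤ c) :
    (t + 1) ^ 2 * (t + 2) * (m + 1) ^ 2 ≤ m ^ c := by
  obtain ⟨n, rfl⟩ : ∃ n, m = n + 1 := ⟨m - 1, by omega⟩
  calc (t + 1) ^ 2 * (t + 2) * (n + 1 + 1) ^ 2 ≤ n ^ 2 * (n + 1) * (n + 2) ^ 2 := by
        gcongr; omega
    _ = (n * (n + 2)) ^ 2 * (n + 1) := by ring
    _ ≤ ((n + 1) ^ 2) ^ 2 * (n + 1) := by gcongr; nlinarith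
    _ = (n + 1) ^ 5 := by ring
    _ ≤ (n + 1) ^ c := Nat.pow_le_pow_right (by omega) hc

lemma cubic_mul_sq_le_pow_of_two_pow {t m c : ℕ} (ht : 1 ≤ t) (hm : 2 ≤ m) (hc : 2 ≤ c)
    (h : 128 * t ^ 4 ≤ 2 ^ c) : (t + 1) ^ 2 * (t + 2) * (m + 1) ^ 2 ≤ m ^ c := by
  obtain ⟨d, rfl⟩ : ∃ d, c = d + 2 := ⟨c - 2, by omega⟩
  have ht' : (t + 1) ^ 2 * (t + 2) ≤ 12 * t ^ 4 :=
    calc (t + 1) ^ 2 * (t + 2) ≤ (2 * t) ^ 2 * (3 * t) := by gcongr <;> omega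
      _ = 12 * t ^ 3 := by ring
      _ ≤ 12 * t ^ 4 := by gcongr; omega
  have hm' : 4 * (m + 1) ^ 2 ≤ 9 * m ^ 2 := by nlinarith
  have hpow : 2 ^ d ≤ m ^ d := Nat.pow_le_pow_left hm d
  have hscaled : 512 * ((t + 1) ^ 2 * (t + 2) * (m + 1) ^ 2) ≤ 432 * m ^ (d + 2) :=
    calc 512 * ((t + 1) ^ 2 * (t + 2) * (m + 1) ^ 2)
        = 128 * ((t + 1) ^ 2 * (t + 2)) * (4 * (m + 1) ^ 2) := by ring
      _ ≤ 128 * (12 * t ^ 4) * (9 * m ^ 2) := by gcongr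
      _ = 108 * (128 * t ^ 4) * m ^ 2 := by ring
      _ ≤ 108 * 2 ^ (d + 2) * m ^ 2 := by gcongr
      _ = 432 * 2 ^ d * m ^ 2 := by ring
      _ ≤ 432 * m ^ d * m ^ 2 := by gcongr
      _ = 432 * m ^ (d + 2) := by ring
  omega

lemma two_pow_ge_of_logb_le {t c : ℕ} (h : 4 * Real.logb 2 t + 7 ≤ c) : 128 * t ^ 4 ≤ 2 ^ c := by
  rcases Nat.eq_zero_or_pos t with rfl | ht
  · simp
  have hlog : Real.logb 2 (128 * t ^ 4) ≤ c := by
    rw [Real.logb_mul (by norm_num) (by positivity), Real.logb_pow,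
      show (128 : ℝ) = 2 ^ 7 by norm_num, Real.logb_pow, Real.logb_self_eq_one one_lt_two]
    push_cast
    linarith
  rw [Real.logb_le_iff_le_rpow one_lt_two (by positivity), Real.rpow_natCast] at hlog
  exact_mod_cast hlog

lemma four_mul_choose_two_le (t m : ℕ) : 4 * m.choose 2 ≤ (t + 1) ^ 2 * (t + 2) * (m + 1) ^ 2 :=
  calc 4 * m.choose 2 ≤ 2 * (m * (m - 1)) := by rw [Nat.choose_two_right]; omega
    _ ≤ 2 * (m + 1) ^ 2 := by gcongr; nlinarith [Nat.sub_le m 1]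
    _ ≤ (t + 1) ^ 2 * (t + 2) * (m + 1) ^ 2 := by gcongr; nlinarith

lemma mul_half_lt_sub_sq {K : Type*} [Field K] [LinearOrder K] [IsStrictOrderedRing K]
    {R Q D : K} (hR : 0 < R) (hQR : Q ≤ R) (hDR : 4 * D ≤ R) :
    R * Q / 2 < (R - D) ^ 2 := by
  nlinarith

lemma theta_pos (c k z : ℕ) : 0 < theta c k z := by
  unfold theta
  refine mul_pos (by positivity) (Finset.prod_pos fun i hi => ?_)
  have hik : i < k := (Finset.mem_Ico.mp hi).2
  exact_mod_cast Nat.choose_pos (Nat.le_mul_of_pos_left c (by omega))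

lemma natCast_sub_mul_theta {c k z : ℕ} (hz : z < k) :
    ((k - z : ℕ) : ℚ) * theta c k z = ((((k - z) * c).choose c : ℕ) : ℚ) * theta c k (z + 1) := by
  unfold theta
  rw [Finset.prod_eq_prod_Ico_succ_bot hz, show k - z = k - (z + 1) + 1 by omega,
    Nat.factorial_succ]
  push_cast
  field_simp

lemma gfun_succ (c k t : ℕ) :
    gfun c k t (t + 1) = theta c k (t + 1) * ((t : ℚ) + 1) * ((k - t : ℕ) : ℚ) := by
  simp [gfun, Nat.choose_succ_self_right]

lemma gfun_add_two (c k t : ℕ) :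
    gfun c k t (t + 2) = theta c k (t + 2) * (((t + 2).choose 2 : ℕ) : ℚ) *
      (((k - t : ℕ) : ℚ) * ((k - t - 1 : ℕ) : ℚ)) := by
  rw [gfun, Nat.choose_symm_add, show t + 2 - t = 2 by omega]
  simp [Finset.prod_Icc_succ_top, Nat.sub_sub]

lemma natCast_mul_theta_succ {c k t : ℕ} (hk : t + 2 ≤ k) :
    ((k - t - 1 : ℕ) : ℚ) * theta c k (t + 1) =
      ((((k - t - 1) * c).choose c : ℕ) : ℚ) * theta c k (t + 2) := by
  rw [Nat.sub_sub]
  exact natCast_sub_mul_theta (by omega)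

lemma gfun_succ_mul_gfun_add_two {c k t : ℕ} (hk : t + 2 ≤ k) :
    gfun c k t (t + 1) * gfun c k t (t + 2) =
      ((((k - t - 1) * c).choose c : ℕ) : ℚ) *
        (((t + 1) ^ 2 * (t + 2) * (k - t - 1 + 1) ^ 2 : ℕ) : ℚ) / 2 * theta c k (t + 2) ^ 2 := by
  rw [gfun_succ, gfun_add_two, show k - t = k - t - 1 + 1 by omega, Nat.cast_choose_two]
  push_cast
  linear_combination
    ((t + 1) ^ 2 * (t + 2) * ((k - t - 1 : ℕ) + 1) ^ 2 / 2 * theta c k (t + 2) : ℚ) *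
      natCast_mul_theta_succ (c := c) hk

lemma f0_eq {c k t : ℕ} (hk : t + 2 ≤ k) :
    f0 c k t = (((((k - t - 1) * c).choose c : ℕ) : ℚ) - (((k - t - 1).choose 2 : ℕ) : ℚ)) *
      theta c k (t + 2) := by
  rw [f0, natCast_mul_theta_succ hk]
  ring

theorem stmt13 (c k t : ℕ) (hc : 6 ≤ c) (ht : 1 ≤ t) (hk : t + 3 ≤ k)
    (hcond : (4 * Real.logb 2 t + 7 ≤ (c : ℝ)) ∨ 2 * t + 3 ≤ k) :
    gfun c k t (t + 1) * gfun c k t (t + 2) < (f0 c k t) ^ 2 := by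
  rw [gfun_succ_mul_gfun_add_two (by omega), f0_eq (by omega), mul_pow]
  set m := k - t - 1
  have hQR : (t + 1) ^ 2 * (t + 2) * (m + 1) ^ 2 ≤ (m * c).choose c := by
    refine le_trans ?_ (pow_le_choose_mul m c)
    rcases hcond with hlog | hkt
    · exact cubic_mul_sq_le_pow_of_two_pow ht (by omega) (by omega) (two_pow_ge_of_logb_le hlog)
    · exact cubic_mul_sq_le_pow_of_le (by omega) (by omega)
  have hDR := (four_mul_choose_two_le t m).trans hQR
  have hR : 0 < (m * c).choose c := Nat.choose_pos (Nat.le_mul_of_pos_left c (by omega))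
  exact mul_lt_mul_of_pos_right
    (mul_half_lt_sub_sq (by exact_mod_cast hR) (by exact_mod_cast hQR) (by exact_mod_cast hDR))
    (pow_pos (theta_pos c k _) 2)
end

section
/- Let c and t be positive integers with c ≥ 6 and c ≥ 4·log₂ t + 7, and set k = t+3. With θ, g, f₀ as defined by θ(c,k,z) = (1/(k-z)!)·∏_{i=z}^{k-1} binom((k-i)c,c), g(c,k,t,z) = θ(c,k,z)·binom(z,t)·∏_{j=1}^{z-t}(k-(t+j-1)), f₀(c,k,t) = (k-t-1)·θ(c,k,t+1) − binom(k-t-1,2)·θ(c,k,t+2), we have g(c,t+3,t,t+1)·g(c,t+3,t,t+3) < f₀(c,t+3,t)². -/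
open Finset

/-!
Everything is explicit once `k = t + 3`: with `N = C(2c, c)` one has `θ(c,k,t+1) = N/2`,
`θ(c,k,t+2) = θ(c,k,t+3) = 1`, so `g(c,k,t,t+1) = 3(t+1)N/2`, `g(c,k,t,t+3) = (t+1)(t+2)(t+3)`
and `f₀(c,k,t) = N - 1`. The hypothesis on `c` gives `N ≥ 2^c ≥ 128 t⁴`, while
`(t+1)²(t+2)(t+3) ≤ 48 t⁴`, so the left side is at most `72 N t⁴ ≤ 9N²/16 < (N - 1)²`.
-/

theorem Nat.two_pow_le_centralBinom (n : ℕ) : 2 ^ n ≤ n.centralBinom := by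
  induction n with
  | zero => simp
  | succ n ih =>
    have hdouble : (n + 1) * (2 * n.centralBinom) ≤ (n + 1) * (n + 1).centralBinom := by
      rw [Nat.succ_mul_centralBinom_succ]; nlinarith
    calc 2 ^ (n + 1) = 2 * 2 ^ n := by ring
      _ ≤ 2 * n.centralBinom := by omega
      _ ≤ (n + 1).centralBinom := Nat.le_of_mul_le_mul_left hdouble n.succ_pos

theorem two_pow_mul_pow_le_two_pow_of_logb_le {x : ℝ} (hx : 0 < x) {a b c : ℕ}
    (h : a * Real.logb 2 x + b ≤ c) : 2 ^ b * x ^ a ≤ 2 ^ c := by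
  calc 2 ^ b * x ^ a = (2 : ℝ) ^ (a * Real.logb 2 x + b) := by
        rw [Real.rpow_add two_pos, mul_comm (a : ℝ), Real.rpow_mul zero_le_two,
          Real.rpow_logb two_pos (by norm_num) hx, Real.rpow_natCast, Real.rpow_natCast, mul_comm]
    _ ≤ (2 : ℝ) ^ (c : ℝ) := Real.rpow_le_rpow_of_exponent_le one_le_two h
    _ = 2 ^ c := Real.rpow_natCast 2 c

theorem prod_Icc_sub_eq_factorial (t m : ℕ) :
    ∏ j ∈ Icc 1 m, ((t + m - (t + j - 1) : ℕ) : ℚ) = (m.factorial : ℚ) := by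
  have hterm : ∀ j ∈ Ico 1 (m + 1), t + m - (t + j - 1) = m + 1 - j := fun j hj => by
    have := (mem_Ico.mp hj).1; omega
  have hreflect := prod_Ico_reflect (fun j => j) 1 (n := m + 1) (m := m + 1) (by omega)
  simp only [show m + 1 + 1 - (m + 1) = 1 by omega, Nat.add_sub_cancel] at hreflect
  rw [← Ico_add_one_right_eq_Icc, ← Nat.cast_prod, prod_congr rfl hterm, hreflect,
    prod_Ico_id_eq_factorial]

section Theta

variable (c : ℕ)

theorem theta_self (k : ℕ) : theta c k k = 1 := by
  simp [theta]

theorem theta_add_one_self (z : ℕ) : theta c (z + 1) z = 1 := by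
  simp [theta]

theorem theta_add_two_self (z : ℕ) : theta c (z + 2) z = ((2 * c).choose c : ℚ) / 2 := by
  rw [theta, show z + 2 = z + 1 + 1 by ring, prod_Ico_succ_top (by omega),
    prod_Ico_succ_top le_rfl, Ico_self, prod_empty, show z + 1 + 1 - z = 2 by omega,
    show z + 1 + 1 - (z + 1) = 1 by omega, one_mul, one_mul, Nat.choose_self, Nat.factorial_two]
  push_cast
  ring

end Theta

theorem gfun_add_one (c k t : ℕ) :
    gfun c k t (t + 1) = theta c k (t + 1) * (t + 1) * ((k - t : ℕ) : ℚ) := by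
  simp [gfun, Nat.choose_succ_self_right]

theorem gfun_self {c k t : ℕ} (h : t ≤ k) : gfun c k t k = (k.descFactorial (k - t) : ℚ) := by
  obtain ⟨m, rfl⟩ := Nat.exists_eq_add_of_le h
  rw [gfun, theta_self, Nat.add_sub_cancel_left, prod_Icc_sub_eq_factorial,
    Nat.descFactorial_eq_factorial_mul_choose, ← Nat.choose_symm_add]
  push_cast
  ring

theorem f0_add_three_self (c t : ℕ) : f0 c (t + 3) t = ((2 * c).choose c : ℚ) - 1 := by
  rw [f0, show t + 3 = t + 1 + 2 by ring, theta_add_two_self, theta_add_one_self,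
    show t + 1 + 2 - t - 1 = 2 by omega, Nat.choose_self]
  push_cast
  ring

theorem three_halves_mul_lt_sub_one_sq {N t : ℚ} (ht : 1 ≤ t) (hN : 128 * t ^ 4 ≤ N) :
    N / 2 * (t + 1) * 3 * ((t + 1) * (t + 2) * (t + 3)) < (N - 1) ^ 2 := by
  have hpoly : (t + 1) ^ 2 * (t + 2) * (t + 3) ≤ 48 * t ^ 4 := by
    nlinarith [sq_nonneg (t - 1), sq_nonneg (t ^ 2 - 1), mul_le_mul_of_nonneg_left ht zero_le_one]
  have hN128 : 128 ≤ N := by nlinarith [one_le_pow₀ (n := 4) ht]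
  calc N / 2 * (t + 1) * 3 * ((t + 1) * (t + 2) * (t + 3))
      = 3 / 2 * N * ((t + 1) ^ 2 * (t + 2) * (t + 3)) := by ring
    _ ≤ 3 / 2 * N * (48 * t ^ 4) := by gcongr
    _ ≤ 9 / 16 * N ^ 2 := by nlinarith
    _ < (N - 1) ^ 2 := by nlinarith

theorem stmt14_general (c t : ℕ) (ht : 1 ≤ t)
    (hcond : 4 * Real.logb 2 t + 7 ≤ (c : ℝ)) :
    gfun c (t + 3) t (t + 1) * gfun c (t + 3) t (t + 3) < (f0 c (t + 3) t) ^ 2 := by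
  have hpow : 2 ^ 7 * (t : ℝ) ^ 4 ≤ 2 ^ c :=
    two_pow_mul_pow_le_two_pow_of_logb_le (by exact_mod_cast ht) (by exact_mod_cast hcond)
  have hcentral : (2 : ℝ) ^ c ≤ ((2 * c).choose c : ℕ) := by
    exact_mod_cast Nat.centralBinom_eq_two_mul_choose c ▸ c.two_pow_le_centralBinom
  have hN : 128 * (t : ℚ) ^ 4 ≤ ((2 * c).choose c : ℕ) := by
    have : 128 * (t : ℝ) ^ 4 ≤ ((2 * c).choose c : ℕ) := by linarith
    exact_mod_cast this
  have hdesc : ((t + 3).descFactorial 3 : ℚ) = (t + 1) * (t + 2) * (t + 3) := by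
    simp only [Nat.descFactorial, Nat.reduceSubDiff, Nat.add_one_sub_one, tsub_zero, mul_one]
    push_cast
    ring
  rw [gfun_add_one, theta_add_two_self c (t + 1), gfun_self (by omega), f0_add_three_self,
    show t + 3 - t = 3 by omega, hdesc]
  exact three_halves_mul_lt_sub_one_sq (by exact_mod_cast ht) hN

theorem stmt14 (c t : ℕ) (hc : 6 ≤ c) (ht : 1 ≤ t)
    (hcond : 4 * Real.logb 2 t + 7 ≤ (c : ℝ)) :
    gfun c (t + 3) t (t + 1) * gfun c (t + 3) t (t + 3) < (f0 c (t + 3) t) ^ 2 :=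
  stmt14_general c t ht hcond
end

section
/- Let c, k, t be positive integers with c ≥ 6, k ≥ t+3, and k ≥ 2t+4, and suppose c ≥ 4·log₂ t + 7 or k ≥ 2t+3. Define θ(c,k,z) = (1/(k-z)!)·∏_{i=z}^{k-1} binom((k-i)c,c), f₀(c,k,t) = (k-t-1)·θ(c,k,t+1) − binom(k-t-1,2)·θ(c,k,t+2), and f₂(c,k,t) = (t+2)·θ(c,k,t+1) − (t+1)(k-t-1)·θ(c,k,t+2). Then f₀(c,k,t) > f₂(c,k,t). -/
open Finset

/-!
With `m = k - t - 1`, the recurrence `m · θ(c,k,t+1) = C(mc, c) · θ(c,k,t+2)` turns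
`m · (f₀ - f₂)` into `θ(c,k,t+2)` times `(m - t - 2) · C(mc, c) + (t + 1) m² - m · C(m, 2)`.
This is positive because `m ≥ t + 3` and `C(mc, c) ≥ C(3m, 3) > m · C(m, 2)` once `c ≥ 3`.
-/

lemma Nat.choose_le_choose_of_le_of_two_mul_le {n a b : ℕ} (hab : a ≤ b) (hb : 2 * b ≤ n) :
    n.choose a ≤ n.choose b := by
  induction b, hab using Nat.le_induction with
  | base => rfl
  | succ b _ ih => exact (ih (by omega)).trans (Nat.choose_le_succ_of_lt_half_left (by omega))

lemma mul_choose_two_lt_choose_three_mul (m : ℕ) (hm : 1 ≤ m) :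
    m * m.choose 2 < (3 * m).choose 3 := by
  have h3 : 6 * (3 * m).choose 3 = 3 * m * (3 * m - 1) * (3 * m - 2) := by
    rw [show 6 = Nat.factorial 3 from rfl, ← Nat.descFactorial_eq_factorial_mul_choose]
    simp [Nat.descFactorial]
    ring
  have h2 : 2 * m.choose 2 = m * (m - 1) := by
    rw [Nat.choose_two_right]
    exact Nat.mul_div_cancel' (Nat.even_mul_pred_self m).two_dvd
  obtain ⟨n, rfl⟩ : ∃ n, m = n + 1 := ⟨m - 1, by omega⟩
  have e1 : 3 * (n + 1) - 1 = 3 * n + 2 := by omega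
  have e2 : 3 * (n + 1) - 2 = 3 * n + 1 := by omega
  rw [e1, e2] at h3
  simp only [Nat.add_sub_cancel] at h2
  nlinarith

lemma mul_choose_two_lt_choose_mul (m c : ℕ) (hm : 1 ≤ m) (hc : 3 ≤ c) :
    m * m.choose 2 < (m * c).choose c := by
  rcases hm.eq_or_lt with rfl | hm2
  · simp
  calc m * m.choose 2 < (3 * m).choose 3 := mul_choose_two_lt_choose_three_mul m hm
    _ ≤ (m * c).choose 3 := Nat.choose_le_choose 3 (by nlinarith)
    _ ≤ (m * c).choose c := Nat.choose_le_choose_of_le_of_two_mul_le hc (by nlinarith)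

lemma theta_succ (c k z : ℕ) (h : z < k) :
    ((k - z : ℕ) : ℚ) * theta c k z = (((k - z) * c).choose c : ℚ) * theta c k (z + 1) := by
  have hf : (k - z).factorial = (k - z) * (k - (z + 1)).factorial := by
    rw [show k - z = (k - (z + 1)) + 1 by omega, Nat.factorial_succ]
  have hkz : ((k - z : ℕ) : ℚ) ≠ 0 := by
    have : 0 < k - z := by omega
    positivity
  unfold theta
  rw [Finset.prod_eq_prod_Ico_succ_bot h, hf]
  push_cast
  field_simp

lemma mul_f0_sub_f2q (c k t : ℕ) (hk : t + 2 ≤ k) :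
    ((k - t - 1 : ℕ) : ℚ) * (f0 c k t - f2q c k t) =
      ((((k - t - 1 : ℕ) : ℚ) - (t + 2)) * (((k - t - 1) * c).choose c : ℚ)
        + (t + 1) * ((k - t - 1 : ℕ) : ℚ) ^ 2
        - ((k - t - 1 : ℕ) : ℚ) * ((k - t - 1).choose 2 : ℚ)) * theta c k (t + 2) := by
  have hrec := theta_succ c k (t + 1) (by omega)
  rw [← Nat.sub_sub] at hrec
  unfold f0 f2q
  linear_combination (((k - t - 1 : ℕ) : ℚ) - t - 2) * hrec

theorem stmt15_general (c k t : ℕ) (hc : 6 ≤ c) (hk' : 2 * t + 4 ≤ k) :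
    f2q c k t < f0 c k t := by
  set m := k - t - 1
  have hm : t + 3 ≤ m := by omega
  have hkey : (m : ℚ) * (m.choose 2 : ℚ) < ((m * c).choose c : ℚ) := by
    exact_mod_cast mul_choose_two_lt_choose_mul m c (by omega) (by omega)
  have hmq : (t : ℚ) + 3 ≤ m := by exact_mod_cast hm
  have hprod : 0 < (m : ℚ) * (f0 c k t - f2q c k t) := by
    rw [mul_f0_sub_f2q c k t (by omega)]
    exact mul_pos (by nlinarith) (theta_pos c k (t + 2))
  exact sub_pos.mp (pos_of_mul_pos_right hprod m.cast_nonneg)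

theorem stmt15 (c k t : ℕ) (hc : 6 ≤ c) (ht : 1 ≤ t) (hk : t + 3 ≤ k) (hk' : 2 * t + 4 ≤ k)
    (hcond : (4 * Real.logb 2 t + 7 ≤ (c : ℝ)) ∨ 2 * t + 3 ≤ k) :
    f2q c k t < f0 c k t :=
  stmt15_general c k t hc hk'
end

section
/- Let c, k, t be positive integers with c ≥ 2 and k ≥ t+2. Fix a family T of t pairwise disjoint c-subsets of [ck] and a family M of k-1 pairwise disjoint c-subsets with T ⊆ M. For j ∈ {t,...,k-1} let A_j = {c-uniform partitions F of [ck] : T ⊆ F and |M ∩ F| = j}. Then binom(k-t-1, j-t)·(1/(k-j)!)·∏_{i=j}^{k-1} binom((k-i)c,c) = Σ_{i=j}^{k-1} binom(i-t, j-t)·|A_i|. -/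
open Finset

/-!
Double count the pairs `(I, F)` with `T ⊆ I ⊆ M`, `|I| = j` and `F` a `c`-uniform partition
containing `I`. For fixed `I`, such `F` are the partitions of the remaining `(k - j)c` points.
Writing `P(m)` for the number of `c`-uniform partitions of an `mc`-set, counting pairs
(block, partition containing it) gives `m · P(m) = C(mc, c) · P(m - 1)`, hence
`m! · P(m) = ∏_{i<m} C((m - i)c, c)`. For fixed `F`, the admissible `I` are the `j`-subsets
of `M ∩ F` containing `T`, of which there are `C(|M ∩ F| - t, j - t)`.
-/

open scoped Nat

section UniformPartition

variable {α : Type*} [DecidableEq α] {c : ℕ}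

def IsUniformPartition (c : ℕ) (R : Finset α) (G : Finset (Finset α)) : Prop :=
  (∀ e ∈ G, #e = c) ∧ (G : Set (Finset α)).PairwiseDisjoint id ∧ G.biUnion id = R

namespace IsUniformPartition

variable {R S : Finset α} {G I : Finset (Finset α)}

lemma subset (hG : IsUniformPartition c R G) {e : Finset α} (he : e ∈ G) : e ⊆ R :=
  hG.2.2 ▸ subset_biUnion_of_mem id he

lemma card_eq (hG : IsUniformPartition c R G) : #R = #G * c := by
  rw [← hG.2.2, card_biUnion hG.2.1]
  exact sum_const_nat hG.1

lemma union (hG : IsUniformPartition c R G) (hI : IsUniformPartition c S I)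
    (hRS : Disjoint R S) : IsUniformPartition c (R ∪ S) (G ∪ I) := by
  refine ⟨fun e he => (mem_union.1 he).elim (hG.1 e) (hI.1 e), ?_, ?_⟩
  · rw [coe_union]
    exact hG.2.1.union hI.2.1 fun e he f hf _ =>
      hRS.mono (hG.subset he) (hI.subset hf)
  · rw [union_biUnion, hG.2.2, hI.2.2]

lemma sdiff (hG : IsUniformPartition c R G) (hI : IsUniformPartition c S I) (hIG : I ⊆ G) :
    IsUniformPartition c (R \ S) (G \ I) := by
  refine ⟨fun e he => hG.1 e (mem_sdiff.1 he).1,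
    hG.2.1.subset (coe_subset.2 sdiff_subset), ?_⟩
  have hdisj : Disjoint ((G \ I).biUnion id) S := by
    rw [← hI.2.2, disjoint_biUnion_left]
    intro e he
    rw [disjoint_biUnion_right]
    intro f hf
    exact hG.2.1 (mem_sdiff.1 he).1 (hIG hf) fun hef => (mem_sdiff.1 he).2 (hef ▸ hf)
  rw [← hG.2.2, ← hI.2.2, ← sdiff_union_of_subset hIG, union_biUnion,
    sdiff_union_of_subset hIG, hI.2.2, union_sdiff_cancel_right hdisj]

lemma disjoint (hc : 0 < c) (hG : IsUniformPartition c R G) (hI : IsUniformPartition c S I)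
    (hRS : Disjoint R S) : Disjoint G I := by
  refine disjoint_left.2 fun e heG heI => ?_
  have he : e = ∅ := disjoint_self.1 (hRS.mono (hG.subset heG) (hI.subset heI))
  have := hG.1 e heG
  rw [he, card_empty] at this
  omega

end IsUniformPartition

lemma isUniformPartition_singleton {B : Finset α} (hB : #B = c) :
    IsUniformPartition c B {B} := by
  simp [IsUniformPartition, hB]

open Classical in
noncomputable def uniformPartitions (c : ℕ) (R : Finset α) : Finset (Finset (Finset α)) :=
  R.powerset.powerset.filter (IsUniformPartition c R)

lemma mem_uniformPartitions {R : Finset α} {G : Finset (Finset α)} :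
    G ∈ uniformPartitions c R ↔ IsUniformPartition c R G := by
  simp only [uniformPartitions, mem_filter, mem_powerset, and_iff_right_iff_imp]
  exact fun hG e he => mem_powerset.2 (hG.subset he)

lemma card_filter_superset_uniformPartitions (hc : 0 < c) {R S : Finset α}
    {I : Finset (Finset α)} (hI : IsUniformPartition c S I) (hSR : S ⊆ R) :
    #{G ∈ uniformPartitions c R | I ⊆ G} = #(uniformPartitions c (R \ S)) := by
  refine card_bij' (fun G _ => G \ I) (fun H _ => H ∪ I) (fun G hG => ?_) (fun H hH => ?_)
    (fun G hG => sdiff_union_of_subset (mem_filter.1 hG).2) (fun H hH => ?_)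
  · obtain ⟨hG, hIG⟩ := mem_filter.1 hG
    exact mem_uniformPartitions.2 ((mem_uniformPartitions.1 hG).sdiff hI hIG)
  · refine mem_filter.2 ⟨mem_uniformPartitions.2 ?_, subset_union_right⟩
    simpa only [sdiff_union_of_subset hSR] using
      (mem_uniformPartitions.1 hH).union hI sdiff_disjoint
  · exact union_sdiff_cancel_right
      ((mem_uniformPartitions.1 hH).disjoint hc hI sdiff_disjoint)

lemma uniformPartitions_empty (hc : 0 < c) :
    uniformPartitions c (∅ : Finset α) = {∅} := by
  ext G
  rw [mem_uniformPartitions, mem_singleton]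
  refine ⟨fun hG => ?_, fun hG => by simp [hG, IsUniformPartition]⟩
  have := hG.card_eq
  rw [card_empty, eq_comm, mul_eq_zero, card_eq_zero] at this
  exact this.resolve_right hc.ne'

lemma sum_card_filter_mem_uniformPartitions (R : Finset α) :
    ∑ B ∈ R.powersetCard c, #{G ∈ uniformPartitions c R | B ∈ G} =
      ∑ G ∈ uniformPartitions c R, #G := by
  refine (sum_card_bipartiteAbove_eq_sum_card_bipartiteBelow (r := (· ∈ ·))).trans
    (sum_congr rfl fun G hG => ?_)
  rw [bipartiteBelow, filter_mem_eq_inter, inter_eq_right.2 fun B hB => mem_powersetCard.2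
    ⟨(mem_uniformPartitions.1 hG).subset hB, (mem_uniformPartitions.1 hG).1 B hB⟩]

theorem factorial_mul_card_uniformPartitions (hc : 0 < c) :
    ∀ (m : ℕ) (R : Finset α), #R = m * c →
      m ! * #(uniformPartitions c R) = ∏ i ∈ range m, ((m - i) * c).choose c
  | 0, R, hR => by
    rw [zero_mul, Finset.card_eq_zero] at hR
    simp [hR, uniformPartitions_empty hc]
  | m + 1, R, hR => by
    have hfiber : ∀ B ∈ R.powersetCard c,
        m ! * #{G ∈ uniformPartitions c R | B ∈ G} = ∏ i ∈ range m, ((m - i) * c).choose c := by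
      intro B hB
      obtain ⟨hBR, hBc⟩ := mem_powersetCard.1 hB
      rw [← factorial_mul_card_uniformPartitions hc m (R \ B) (by
        rw [card_sdiff_of_subset hBR, hR, hBc, Nat.add_one_mul, Nat.add_sub_cancel]),
        ← card_filter_superset_uniformPartitions hc (isUniformPartition_singleton hBc) hBR]
      simp only [singleton_subset_iff]
    have hcount : ∑ G ∈ uniformPartitions c R, #G = #(uniformPartitions c R) * (m + 1) := by
      refine sum_const_nat fun G hG => ?_
      have := (mem_uniformPartitions.1 hG).card_eq
      rw [hR] at this
      exact (Nat.eq_of_mul_eq_mul_right hc this).symm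
    calc (m + 1)! * #(uniformPartitions c R)
        = m ! * ∑ B ∈ R.powersetCard c, #{G ∈ uniformPartitions c R | B ∈ G} := by
          rw [sum_card_filter_mem_uniformPartitions, hcount, Nat.factorial_succ]; ring
      _ = ∑ B ∈ R.powersetCard c, ∏ i ∈ range m, ((m - i) * c).choose c := by
          rw [mul_sum]; exact sum_congr rfl hfiber
      _ = ∏ i ∈ range (m + 1), ((m + 1 - i) * c).choose c := by
          rw [sum_const, card_powersetCard, hR, smul_eq_mul, prod_range_succ']
          simp [mul_comm]

lemma factorial_mul_card_filter_superset_uniformPartitions (hc : 0 < c) {k : ℕ}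
    {R S : Finset α} (hR : #R = k * c) {I : Finset (Finset α)}
    (hI : IsUniformPartition c S I) (hSR : S ⊆ R) :
    (k - #I)! * #{G ∈ uniformPartitions c R | I ⊆ G} =
      ∏ i ∈ range (k - #I), ((k - #I - i) * c).choose c := by
  rw [card_filter_superset_uniformPartitions hc hI hSR]
  refine factorial_mul_card_uniformPartitions hc _ _ ?_
  rw [card_sdiff_of_subset hSR, hR, hI.card_eq, Nat.sub_mul]

end UniformPartition

section DoubleCounting

variable {β : Type*} [DecidableEq β] (𝓕 : Finset (Finset β)) {T M : Finset β} {j : ℕ}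

lemma sum_card_filter_superset_eq_sum_choose (hTM : T ⊆ M) (hT𝓕 : ∀ F ∈ 𝓕, T ⊆ F)
    (hj : #T ≤ j) :
    ∑ I ∈ (M.powersetCard j).filter (T ⊆ ·), #{F ∈ 𝓕 | I ⊆ F} =
      ∑ F ∈ 𝓕, (#(M ∩ F) - #T).choose (j - #T) := by
  refine (sum_card_bipartiteAbove_eq_sum_card_bipartiteBelow
    (r := fun I F : Finset β => I ⊆ F)).trans
    (sum_congr rfl fun F hF => ?_)
  have : ((M.powersetCard j).filter (T ⊆ ·)).bipartiteBelow (fun I F => I ⊆ F) F =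
      ((M ∩ F).powersetCard j).filter (T ⊆ ·) := by
    ext I
    simp only [bipartiteBelow, mem_filter, mem_powersetCard, subset_inter_iff]
    tauto
  rw [this, card_filter_powersetCard_subset _ _ _ (subset_inter hTM (hT𝓕 F hF)) hj]

lemma sum_choose_card_inter_eq (hTM : T ⊆ M) (hT𝓕 : ∀ F ∈ 𝓕, T ⊆ F) (hj : #T ≤ j) :
    ∑ F ∈ 𝓕, (#(M ∩ F) - #T).choose (j - #T) =
      ∑ i ∈ Icc j #M, (i - #T).choose (j - #T) * #{F ∈ 𝓕 | #(M ∩ F) = i} := by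
  have hmaps : ∀ F ∈ 𝓕, #(M ∩ F) ∈ Icc #T #M := fun F hF => mem_Icc.2
    ⟨card_le_card (subset_inter hTM (hT𝓕 F hF)), card_le_card inter_subset_left⟩
  rw [← sum_fiberwise_of_maps_to' hmaps fun i => (i - #T).choose (j - #T)]
  simp_rw [sum_const, smul_eq_mul, mul_comm]
  refine (sum_subset (Icc_subset_Icc_left hj) fun i hi hij => ?_).symm
  rw [mem_Icc] at hi hij
  rw [Nat.choose_eq_zero_of_lt (by omega), zero_mul]

end DoubleCounting

lemma uPartition_iff_isUniformPartition {c k : ℕ} (hc : 0 < c)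
    {F : Finset (Finset (Fin (c * k)))} : UPartition c k F ↔ IsUniformPartition c univ F := by
  constructor
  · rintro ⟨⟨-, hblocks, hdisj⟩, hcover⟩
    exact ⟨hblocks, fun e he f hf => hdisj e he f hf,
      eq_univ_of_forall fun x => by simpa using hcover x⟩
  · intro hF
    have hk : #F = k := by
      have := hF.card_eq
      rw [card_univ, Fintype.card_fin] at this
      exact Nat.eq_of_mul_eq_mul_right hc (this.symm.trans (mul_comm c k))
    refine ⟨⟨hk, hF.1, fun e he f hf => hF.2.1 he hf⟩, fun x => ?_⟩
    have hx : x ∈ F.biUnion id := hF.2.2 ▸ mem_univ x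
    simpa using hx

lemma UParts.isUniformPartition_of_subset {c k ℓ : ℕ} {M I : Finset (Finset (Fin (c * k)))}
    (hM : UParts c k ℓ M) (hIM : I ⊆ M) : IsUniformPartition c (I.biUnion id) I :=
  ⟨fun e he => hM.2.1 e (hIM he), fun e he f hf => hM.2.2 e (hIM he) f (hIM hf), rfl⟩

theorem stmt16_general (c k t : ℕ) (hc : 2 ≤ c)
    (T M : Finset (Finset (Fin (c * k)))) (hT : UParts c k t T)
    (hM : UParts c k (k - 1) M) (hTM : T ⊆ M)
    (j : ℕ) (hj : t ≤ j) :
    (k - t - 1).choose (j - t) * ∏ i ∈ Finset.Ico j k, ((k - i) * c).choose c =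
      (k - j).factorial * ∑ i ∈ Finset.Icc j (k - 1),
        (i - t).choose (j - t) *
          {F | UPartition c k F ∧ T ⊆ F ∧ (M ∩ F).card = i}.ncard := by
  have hcpos : 0 < c := by omega
  set 𝓕 := {F ∈ uniformPartitions c (univ : Finset (Fin (c * k))) | T ⊆ F}
  have hT𝓕 : ∀ F ∈ 𝓕, T ⊆ F := fun F hF => (mem_filter.1 hF).2
  have htj : #T ≤ j := hT.1 ▸ hj
  have hextend : ∀ I ∈ (M.powersetCard j).filter (T ⊆ ·),
      (k - j)! * #{F ∈ 𝓕 | I ⊆ F} = ∏ i ∈ Ico j k, ((k - i) * c).choose c := by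
    intro I hI
    obtain ⟨⟨hIM, rfl⟩, hTI⟩ := mem_filter.1 hI |>.imp_left mem_powersetCard.1
    rw [filter_filter, filter_congr fun F _ => and_iff_right_of_imp hTI.trans,
      factorial_mul_card_filter_superset_uniformPartitions hcpos (by simp [mul_comm])
        (hM.isUniformPartition_of_subset hIM) (subset_univ _), prod_Ico_eq_prod_range]
    simp only [Nat.sub_sub]
  have hlevel : ∀ i, {F | UPartition c k F ∧ T ⊆ F ∧ #(M ∩ F) = i}.ncard =
      #{F ∈ 𝓕 | #(M ∩ F) = i} := by
    intro i
    rw [← Set.ncard_coe_finset]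
    congr 1
    ext F
    simp [𝓕, mem_uniformPartitions, uPartition_iff_isUniformPartition hcpos, and_assoc]
  calc (k - t - 1).choose (j - t) * ∏ i ∈ Ico j k, ((k - i) * c).choose c
      = ∑ I ∈ (M.powersetCard j).filter (T ⊆ ·), ∏ i ∈ Ico j k, ((k - i) * c).choose c := by
        rw [sum_const, card_filter_powersetCard_subset _ _ _ hTM htj, hM.1, hT.1,
          smul_eq_mul, Nat.sub_right_comm]
    _ = (k - j)! * ∑ I ∈ (M.powersetCard j).filter (T ⊆ ·), #{F ∈ 𝓕 | I ⊆ F} := by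
        rw [mul_sum]; exact (sum_congr rfl hextend).symm
    _ = _ := by
        rw [sum_card_filter_superset_eq_sum_choose 𝓕 hTM hT𝓕 htj,
          sum_choose_card_inter_eq 𝓕 hTM hT𝓕 htj, hM.1, hT.1]
        simp_rw [hlevel]

theorem stmt16 (c k t : ℕ) (hc : 2 ≤ c) (ht : 1 ≤ t) (hk : t + 2 ≤ k)
    (T M : Finset (Finset (Fin (c * k)))) (hT : UParts c k t T)
    (hM : UParts c k (k - 1) M) (hTM : T ⊆ M)
    (j : ℕ) (hj : t ≤ j) (hjk : j ≤ k - 1) :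
    (k - t - 1).choose (j - t) * ∏ i ∈ Finset.Ico j k, ((k - i) * c).choose c =
      (k - j).factorial * ∑ i ∈ Finset.Icc j (k - 1),
        (i - t).choose (j - t) *
          {F | UPartition c k F ∧ T ⊆ F ∧ (M ∩ F).card = i}.ncard :=
  stmt16_general c k t hc T M hT hM hTM j hj
end

section
/- Let c, k, t be positive integers with c ≥ 2 and k ≥ t+2. Fix T ∈ U^{[ck]}_{c,t} and M ∈ U^{[ck]}_{c,k-1} with T ⊆ M, and define f₀(c,k,t) = (k-t-1)·θ(c,k,t+1) − binom(k-t-1,2)·θ(c,k,t+2) where θ(c,k,z) = (1/(k-z)!)·∏_{i=z}^{k-1} binom((k-i)c,c). Then f₀(c,k,t) = Σ_{i=1}^{k-t-1} ((3i−i²)/2)·|A_{t+i}|, where A_j = {c-uniform partitions F : T ⊆ F, |M ∩ F| = j}; in particular f₀(c,k,t) ≤ |A_{t+1}| + |A_{t+2}|. -/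
/-!
Write `E(S)` for the set of partitions extending a partial partition `S`. Peeling off the block
through a point not covered by `S` (there are `C((k - |S|)c - 1, c - 1)` choices for it) gives
`|E(S)| = θ(c, k, |S|)`. Counting pairs `(P, F)` with `P` an `r`-set of blocks of `M \ T` and
`F ∈ E(T ∪ P)` in two ways gives
`C(k - 1 - t, r) θ(c, k, t + r) = ∑_{F ∈ E(T)} C(|(M \ T) ∩ F|, r)`.
Subtracting the case `r = 2` from the case `r = 1` yields the identity, since
`i - C(i, 2) = (3i - i²)/2`; this coefficient is `1` for `i = 1, 2` and `≤ 0` for `i ≥ 3`.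
-/

open Finset

section UParts

variable {c k z : ℕ} {S : Finset (Finset (Fin (c * k)))}

lemma UParts.card_biUnion (hS : UParts c k z S) : #(S.biUnion id) = z * c := by
  rw [Finset.card_biUnion (t := id) fun e he f hf => hS.2.2 e he f hf]
  exact (sum_congr rfl hS.2.1).trans (by rw [sum_const, smul_eq_mul, hS.1])

lemma UParts.le (hc : 0 < c) (hS : UParts c k z S) : z ≤ k := by
  have h := hS.card_biUnion ▸ card_le_univ (S.biUnion id)
  rw [Fintype.card_fin, mul_comm c] at h
  exact Nat.le_of_mul_le_mul_right h hc

lemma UParts.uPartition (hS : UParts c k k S) : UPartition c k S := by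
  refine ⟨hS, fun x => ?_⟩
  have hcover : S.biUnion id = univ :=
    eq_univ_of_card _ (by rw [hS.card_biUnion, Fintype.card_fin, mul_comm])
  simpa using (hcover ▸ mem_univ x : x ∈ S.biUnion id)

lemma UParts.of_subset {w : ℕ} {M : Finset (Finset (Fin (c * k)))} (hM : UParts c k w M)
    (hSM : S ⊆ M) : UParts c k #S S :=
  ⟨rfl, fun e he => hM.2.1 e (hSM he), fun e he f hf => hM.2.2 e (hSM he) f (hSM hf)⟩

lemma UParts.insert (hc : 0 < c) (hS : UParts c k z S) {e : Finset (Fin (c * k))}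
    (he : #e = c) (hdisj : Disjoint e (S.biUnion id)) : UParts c k (z + 1) (insert e S) := by
  have hdisj' : ∀ f ∈ S, Disjoint e f := fun f hf =>
    hdisj.mono_right (subset_biUnion_of_mem id hf)
  have heS : e ∉ S := fun heS => by
    simp [disjoint_self.mp (hdisj' e heS)] at he
    omega
  refine ⟨by rw [card_insert_of_notMem heS, hS.1], ?_, ?_⟩
  · simpa [he] using hS.2.1
  · simp only [mem_insert]
    rintro f (rfl | hf) g (rfl | hg) hfg
    · exact absurd rfl hfg
    · exact hdisj' g hg
    · exact (hdisj' f hf).symm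
    · exact hS.2.2 f hf g hg hfg

end UParts

lemma Nat.choose_mul_eq_mul_choose_pred (n : ℕ) {c : ℕ} (hc : 0 < c) :
    (n * c).choose c = n * (n * c - 1).choose (c - 1) := by
  rcases Nat.eq_zero_or_pos n with rfl | hn
  · simp [Nat.choose_eq_zero_of_lt hc]
  have h := Nat.add_one_mul_choose_eq (n * c - 1) (c - 1)
  rw [Nat.sub_add_cancel (Nat.mul_pos hn hc), Nat.sub_add_cancel hc] at h
  refine Nat.eq_of_mul_eq_mul_right hc ?_
  rw [← h]
  ring

lemma theta_eq_choose_mul_theta_succ {c k z : ℕ} (hc : 0 < c) (hz : z < k) :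
    theta c k z = (((k - z) * c - 1).choose (c - 1) : ℚ) * theta c k (z + 1) := by
  obtain ⟨n, hn⟩ : ∃ n, k - z = n + 1 := ⟨k - z - 1, by omega⟩
  have hfac : ((k - z).factorial : ℚ) = (n + 1) * (k - (z + 1)).factorial := by
    rw [hn, show k - (z + 1) = n by omega, Nat.factorial_succ]
    push_cast
    ring
  rw [theta, theta, prod_eq_prod_Ico_succ_bot hz, hfac, hn,
    Nat.choose_mul_eq_mul_choose_pred _ hc]
  push_cast
  field_simp

open Classical in
noncomputable def extensions (c k : ℕ) (S : Finset (Finset (Fin (c * k)))) :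
    Finset (Finset (Finset (Fin (c * k)))) :=
  {F | UPartition c k F ∧ S ⊆ F}

section Extensions

variable {c k z : ℕ} {S F : Finset (Finset (Fin (c * k)))}

@[simp]
lemma mem_extensions : F ∈ extensions c k S ↔ UPartition c k F ∧ S ⊆ F := by
  simp [extensions]

lemma extensions_union (S P : Finset (Finset (Fin (c * k)))) :
    extensions c k (S ∪ P) = {F ∈ extensions c k S | P ⊆ F} := by
  ext F
  simp [union_subset_iff, and_assoc]

lemma extensions_of_card_eq (hS : UParts c k k S) : extensions c k S = {S} := by
  ext F
  simp only [mem_extensions, mem_singleton]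
  constructor
  · rintro ⟨hF, hSF⟩
    exact (eq_of_subset_of_card_le hSF (by rw [hF.1.1, hS.1])).symm
  · rintro rfl
    exact ⟨hS.uPartition, Subset.rfl⟩

lemma extensions_eq_biUnion {x : Fin (c * k)} (hx : x ∉ S.biUnion id) :
    extensions c k S = {e ∈ (S.biUnion id)ᶜ.powersetCard c | x ∈ e}.biUnion
      fun e => extensions c k (insert e S) := by
  ext F
  simp only [mem_biUnion, mem_filter, mem_powersetCard, mem_extensions, insert_subset_iff]
  constructor
  · rintro ⟨hF, hSF⟩
    obtain ⟨e, heF, hxe⟩ := hF.2 x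
    refine ⟨e, ⟨⟨fun y hy => mem_compl.mpr fun hyS => ?_, hF.1.2.1 e heF⟩, hxe⟩,
      hF, heF, hSF⟩
    obtain ⟨s, hs, hys⟩ := mem_biUnion.mp hyS
    have hes : e ≠ s := by rintro rfl; exact hx (mem_biUnion.mpr ⟨e, hs, hxe⟩)
    exact disjoint_left.mp (hF.1.2.2 e heF s (hSF hs) hes) hy hys
  · rintro ⟨e, -, hF, -, hSF⟩
    exact ⟨hF, hSF⟩

lemma card_extensions (hc : 0 < c) (hS : UParts c k z S) :
    (#(extensions c k S) : ℚ) = theta c k z := by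
  obtain ⟨n, hn⟩ : ∃ n, k - z = n := ⟨_, rfl⟩
  induction n generalizing z S with
  | zero =>
    obtain rfl : z = k := le_antisymm (hS.le hc) (by omega)
    simp [extensions_of_card_eq hS, theta]
  | succ n ih =>
    set U := (S.biUnion id)ᶜ
    have hU : #U = (k - z) * c := by
      rw [card_compl, Fintype.card_fin, hS.card_biUnion, Nat.sub_mul, mul_comm c k]
    obtain ⟨x, hx⟩ : U.Nonempty := card_pos.mp (by rw [hU]; exact Nat.mul_pos (by omega) hc)
    have hblocks : #{e ∈ U.powersetCard c | x ∈ e} = ((k - z) * c - 1).choose (c - 1) := by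
      simpa [hU] using card_filter_powersetCard_subset {x} U c (by simpa using hx) (by simpa)
    have hdisj : (({e ∈ U.powersetCard c | x ∈ e} : Finset _) : Set _).PairwiseDisjoint
        fun e => extensions c k (insert e S) := by
      intro e he f hf hef
      simp only [coe_filter, Set.mem_ofPred_eq] at he hf
      refine disjoint_left.mpr fun F heF hfF => ?_
      simp only [mem_extensions, insert_subset_iff] at heF hfF
      exact disjoint_left.mp (heF.1.1.2.2 e heF.2.1 f hfF.2.1 hef) he.2 hf.2
    have hfibre : ∀ e ∈ {e ∈ U.powersetCard c | x ∈ e},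
        (#(extensions c k (insert e S)) : ℚ) = theta c k (z + 1) := by
      intro e he
      obtain ⟨⟨heU, hec⟩, -⟩ := mem_filter.mp he |>.imp_left mem_powersetCard.mp
      exact ih (hS.insert hc hec (subset_compl_iff_disjoint_right.mp heU)) (by omega)
    rw [extensions_eq_biUnion (mem_compl.mp hx), card_biUnion hdisj, Nat.cast_sum,
      sum_congr rfl hfibre, sum_const, nsmul_eq_mul, hblocks]
    exact (theta_eq_choose_mul_theta_succ hc (by omega)).symm

end Extensions

theorem Finset.sum_card_filter_subset_powersetCard {α : Type*} [DecidableEq α] (X : Finset α)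
    (𝓕 : Finset (Finset α)) (r : ℕ) :
    ∑ P ∈ X.powersetCard r, #{F ∈ 𝓕 | P ⊆ F} = ∑ F ∈ 𝓕, (#(X ∩ F)).choose r := by
  simp_rw [card_filter]
  rw [sum_comm]
  refine sum_congr rfl fun F _ => ?_
  rw [← card_filter, ← card_powersetCard]
  congr 1
  ext P
  simp only [mem_filter, mem_powersetCard, subset_inter_iff]
  tauto

section DoubleCounting

variable {c k t w : ℕ} {T M : Finset (Finset (Fin (c * k)))}

lemma choose_mul_theta_eq_sum (hc : 0 < c) (hT : UParts c k t T) (hM : UParts c k w M)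
    (hTM : T ⊆ M) (r : ℕ) :
    ((w - t).choose r : ℚ) * theta c k (t + r) =
      ∑ F ∈ extensions c k T, ((#((M \ T) ∩ F)).choose r : ℚ) := by
  have hfibre : ∀ P ∈ (M \ T).powersetCard r,
      (#(extensions c k (T ∪ P)) : ℚ) = theta c k (t + r) := by
    intro P hP
    obtain ⟨hPM, hPr⟩ := mem_powersetCard.mp hP
    have hcard : #(T ∪ P) = t + r := by
      rw [card_union_of_disjoint (disjoint_of_subset_right hPM disjoint_sdiff), hT.1, hPr]
    exact card_extensions hc (hcard ▸ hM.of_subset (union_subset hTM (hPM.trans sdiff_subset)))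
  calc ((w - t).choose r : ℚ) * theta c k (t + r)
      = ∑ P ∈ (M \ T).powersetCard r, (#(extensions c k (T ∪ P)) : ℚ) := by
        rw [sum_congr rfl hfibre, sum_const, card_powersetCard, card_sdiff_of_subset hTM, hT.1,
          hM.1, nsmul_eq_mul]
    _ = ∑ F ∈ extensions c k T, ((#((M \ T) ∩ F)).choose r : ℚ) := by
        simp_rw [extensions_union]
        exact_mod_cast sum_card_filter_subset_powersetCard (M \ T) (extensions c k T) r

end DoubleCounting

section Regrouping

variable {c k t : ℕ} {T M : Finset (Finset (Fin (c * k)))}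

lemma card_sdiff_inter_add_card {F : Finset (Finset (Fin (c * k)))} (hTM : T ⊆ M)
    (hTF : T ⊆ F) : #((M \ T) ∩ F) + #T = #(M ∩ F) := by
  rw [sdiff_inter_right_comm, card_sdiff_add_card_eq_card (subset_inter hTM hTF)]

lemma ncard_setOf_card_inter_eq (hT : UParts c k t T) (hTM : T ⊆ M) (i : ℕ) :
    {F | UPartition c k F ∧ T ⊆ F ∧ #(M ∩ F) = t + i}.ncard =
      #{F ∈ extensions c k T | #((M \ T) ∩ F) = i} := by
  rw [← Set.ncard_coe_finset]
  congr 1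
  ext F
  simp only [Set.mem_ofPred_eq, coe_filter, mem_extensions, and_assoc]
  refine and_congr_right fun _ => and_congr_right fun hTF => ?_
  have := card_sdiff_inter_add_card hTM hTF
  rw [hT.1] at this
  omega

lemma f0_eq_sum_extensions (hc : 0 < c) (hT : UParts c k t T) (hM : UParts c k (k - 1) M)
    (hTM : T ⊆ M) :
    f0 c k t = ∑ F ∈ extensions c k T,
      (3 * (#((M \ T) ∩ F) : ℚ) - (#((M \ T) ∩ F) : ℚ) ^ 2) / 2 := by
  have h₁ := choose_mul_theta_eq_sum hc hT hM hTM 1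
  have h₂ := choose_mul_theta_eq_sum hc hT hM hTM 2
  simp only [Nat.choose_one_right] at h₁
  rw [f0, show k - t - 1 = k - 1 - t by omega, h₁, h₂, ← sum_sub_distrib]
  refine sum_congr rfl fun F _ => ?_
  rw [Nat.cast_choose_two]
  ring

lemma sum_extensions_eq_sum_ncard (hT : UParts c k t T) (hM : UParts c k (k - 1) M)
    (hTM : T ⊆ M) (g : ℕ → ℚ) (hg : g 0 = 0) :
    ∑ F ∈ extensions c k T, g #((M \ T) ∩ F) = ∑ i ∈ Icc 1 (k - t - 1),
      g i * ({F | UPartition c k F ∧ T ⊆ F ∧ (M ∩ F).card = t + i}.ncard : ℚ) := by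
  have hmaps : ∀ F ∈ extensions c k T, #((M \ T) ∩ F) ∈ Icc 0 (k - t - 1) := by
    intro F _
    have := card_le_card (inter_subset_left (s₁ := M \ T) (s₂ := F))
    rw [card_sdiff_of_subset hTM, hM.1, hT.1] at this
    exact mem_Icc.mpr ⟨Nat.zero_le _, by omega⟩
  rw [← sum_fiberwise_of_maps_to' hmaps, ← insert_Icc_add_one_left_eq_Icc (Nat.zero_le _),
    sum_insert (by simp), zero_add]
  simp only [hg, sum_const_zero, zero_add, sum_const, nsmul_eq_mul,
    ncard_setOf_card_inter_eq hT hTM, mul_comm]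

end Regrouping

lemma sum_Icc_mul_le_add (n : ℕ) (x : ℕ → ℚ) (hx : ∀ i, 0 ≤ x i) :
    ∑ i ∈ Icc 1 n, (3 * (i : ℚ) - (i : ℚ) ^ 2) / 2 * x i ≤ x 1 + x 2 :=
  calc ∑ i ∈ Icc 1 n, (3 * (i : ℚ) - (i : ℚ) ^ 2) / 2 * x i
      ≤ ∑ i ∈ Icc 1 n, if i ∈ ({1, 2} : Finset ℕ) then x i else 0 := by
        refine sum_le_sum fun i hi => ?_
        split_ifs with h12
        · rcases mem_insert.mp h12 with rfl | h2
          · norm_num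
          · rw [mem_singleton.mp h2]; norm_num
        · have hi : (3 : ℚ) ≤ i := by
            simp only [mem_insert, mem_singleton, mem_Icc] at h12 hi
            exact_mod_cast (by omega : 3 ≤ i)
          refine mul_nonpos_of_nonpos_of_nonneg ?_ (hx i)
          nlinarith
    _ = ∑ i ∈ Icc 1 n ∩ {1, 2}, x i := sum_ite_mem _ _ _
    _ ≤ ∑ i ∈ ({1, 2} : Finset ℕ), x i :=
        sum_le_sum_of_subset_of_nonneg inter_subset_right fun i _ _ => hx i
    _ = x 1 + x 2 := sum_pair (by norm_num)

theorem stmt17_general (c k t : ℕ) (hc : 2 ≤ c)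
    (T M : Finset (Finset (Fin (c * k)))) (hT : UParts c k t T)
    (hM : UParts c k (k - 1) M) (hTM : T ⊆ M) :
    f0 c k t = (∑ i ∈ Finset.Icc 1 (k - t - 1),
        ((3 * (i : ℚ) - (i : ℚ) ^ 2) / 2) *
          ({F | UPartition c k F ∧ T ⊆ F ∧ (M ∩ F).card = t + i}.ncard : ℚ)) ∧
    f0 c k t ≤ ({F | UPartition c k F ∧ T ⊆ F ∧ (M ∩ F).card = t + 1}.ncard : ℚ) +
      ({F | UPartition c k F ∧ T ⊆ F ∧ (M ∩ F).card = t + 2}.ncard : ℚ) := by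
  have key := (f0_eq_sum_extensions (by omega) hT hM hTM).trans
    (sum_extensions_eq_sum_ncard hT hM hTM (fun i => (3 * (i : ℚ) - (i : ℚ) ^ 2) / 2) (by simp))
  exact ⟨key, key.le.trans (sum_Icc_mul_le_add _ _ fun _ => Nat.cast_nonneg _)⟩

theorem stmt17 (c k t : ℕ) (hc : 2 ≤ c) (ht : 1 ≤ t) (hk : t + 2 ≤ k)
    (T M : Finset (Finset (Fin (c * k)))) (hT : UParts c k t T)
    (hM : UParts c k (k - 1) M) (hTM : T ⊆ M) :
    f0 c k t = (∑ i ∈ Finset.Icc 1 (k - t - 1),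
        ((3 * (i : ℚ) - (i : ℚ) ^ 2) / 2) *
          ({F | UPartition c k F ∧ T ⊆ F ∧ (M ∩ F).card = t + i}.ncard : ℚ)) ∧
    f0 c k t ≤ ({F | UPartition c k F ∧ T ⊆ F ∧ (M ∩ F).card = t + 1}.ncard : ℚ) +
      ({F | UPartition c k F ∧ T ⊆ F ∧ (M ∩ F).card = t + 2}.ncard : ℚ) :=
  stmt17_general c k t hc T M hT hM hTM
end
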